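/- arXiv:1409.6520 — 4 statements merged into one kernel-verified Lean document; each statement's English description precedes it below -/
import Mathlib

section
/- The action density φ̃(z,p) = pᵀ M(z)⁻¹ p is (a) continuous and jointly convex on int S × ℝⁿ; (b) nondegenerate, i.e. φ̃(z,p) > 0 for every z ∈ int S and every p ∈ ℝⁿ with p ≠ 0; and (c) 2-homogeneous in its second argument, i.e. φ̃(z, λp) = λ² φ̃(z,p) for all λ ∈ ℝ, z ∈ int S, p ∈ ℝⁿ. -/
open MeasureTheory Filter Topology Set Matrix
open scoped ENNReal

noncomputable section

/-- First directional derivative of a matrix-valued map. -/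
def matDirDeriv {n : ℕ} (M : (Fin n → ℝ) → Matrix (Fin n) (Fin n) ℝ)
    (z ζ : Fin n → ℝ) : Matrix (Fin n) (Fin n) ℝ :=
  Matrix.of fun i j => deriv (fun t : ℝ => M (z + t • ζ) i j) 0

/-- Second directional derivative of a matrix-valued map. -/
def matDirDeriv2 {n : ℕ} (M : (Fin n → ℝ) → Matrix (Fin n) (Fin n) ℝ)
    (z ζ ζ' : Fin n → ℝ) : Matrix (Fin n) (Fin n) ℝ :=
  Matrix.of fun i j =>
    deriv (fun s : ℝ => deriv (fun t : ℝ => M (z + t • ζ + s • ζ') i j) 0) 0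

/-- Conditions (C0)-(C2) on a mobility matrix. -/
structure IsMobility {n : ℕ} (S : Set (Fin n → ℝ))
    (M : (Fin n → ℝ) → Matrix (Fin n) (Fin n) ℝ) : Prop where
  cont : ∀ i j, ContinuousOn (fun z => M z i j) S
  smooth : ∀ i j, ContDiffOn ℝ (⊤ : ℕ∞) (fun z => M z i j) (interior S)
  symm : ∀ z ∈ interior S, (M z).IsSymm
  posDef : ∀ z ∈ interior S, (M z).PosDef
  concave : ∀ z ∈ interior S, ∀ ζ : Fin n → ℝ, (-(matDirDeriv2 M z ζ ζ)).PosSemidef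

/-- Condition (C3): M(z)ν = 0 for z ∈ ∂S and ν normal to ∂S at z. -/
def MobC3 {n : ℕ} (S : Set (Fin n → ℝ)) (M : (Fin n → ℝ) → Matrix (Fin n) (Fin n) ℝ) : Prop :=
  ∀ z ∈ frontier S, ∀ ν : Fin n → ℝ, (∀ y ∈ S, ν ⬝ᵥ (y - z) ≤ 0) → M z *ᵥ ν = 0

/-- Action density φ̃(z,p) = pᵀ M(z)⁻¹ p. -/
def actDens {n : ℕ} (M : (Fin n → ℝ) → Matrix (Fin n) (Fin n) ℝ)
    (z p : Fin n → ℝ) : ℝ := p ⬝ᵥ ((M z)⁻¹ *ᵥ p)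

/-- Lower semicontinuous envelope of the action density. -/
def actDensLsc {n : ℕ} (M : (Fin n → ℝ) → Matrix (Fin n) (Fin n) ℝ)
    (S : Set (Fin n → ℝ)) (z p : Fin n → ℝ) : ℝ≥0∞ :=
  Filter.liminf (fun q : (Fin n → ℝ) × (Fin n → ℝ) => ENNReal.ofReal (actDens M q.1 q.2))
    (𝓝 (z, p) ⊓ Filter.principal {q | q.1 ∈ interior S})

/-- Action functional Φ(μ,w) = ∫ φ(μ(x),w(x)) dx. -/
def action {n : ℕ} (M : (Fin n → ℝ) → Matrix (Fin n) (Fin n) ℝ) (S : Set (Fin n → ℝ))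
    (μ w : ℝ → Fin n → ℝ) : ℝ≥0∞ :=
  ∫⁻ x : ℝ, actDensLsc M S (μ x) (w x)

/-- Membership in M(ℝ;S): measurable with values in S. -/
def MemM {n : ℕ} (S : Set (Fin n → ℝ)) (μ : ℝ → Fin n → ℝ) : Prop :=
  Measurable μ ∧ ∀ x, μ x ∈ S

/-- Weak* convergence of a sequence, tested against continuous compactly supported functions. -/
def WeakStarTendsto {n : ℕ} (μk : ℕ → ℝ → Fin n → ℝ) (μ : ℝ → Fin n → ℝ) : Prop :=
  ∀ ρ : ℝ → Fin n → ℝ, Continuous ρ → HasCompactSupport ρ →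
    Tendsto (fun k => ∫ x : ℝ, μk k x ⬝ᵥ ρ x) atTop (𝓝 (∫ x : ℝ, μ x ⬝ᵥ ρ x))

/-- Distributional solution of the continuity equation ∂ₜμ + ∂ₓw = 0 on (0,T)×ℝ. -/
def IsDistribSol {n : ℕ} (T : ℝ) (μ w : ℝ → ℝ → Fin n → ℝ) : Prop :=
  ∀ η : ℝ × ℝ → Fin n → ℝ, ContDiff ℝ (⊤ : ℕ∞) η → HasCompactSupport η →
    tsupport η ⊆ Set.Ioo 0 T ×ˢ Set.univ →
    ∫ q : ℝ × ℝ, ((fderiv ℝ η q (1, 0)) ⬝ᵥ μ q.1 q.2 + (fderiv ℝ η q (0, 1)) ⬝ᵥ w q.1 q.2) = 0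

/-- The class 𝒞_T of admissible curves. -/
structure MemCT {n : ℕ} (S : Set (Fin n → ℝ)) (T : ℝ) (μ w : ℝ → ℝ → Fin n → ℝ) : Prop where
  memS : ∀ t ∈ Set.Icc (0:ℝ) T, ∀ x : ℝ, μ t x ∈ S
  meas : ∀ t ∈ Set.Icc (0:ℝ) T, Measurable (μ t)
  wsc : ∀ ρ : ℝ → Fin n → ℝ, Continuous ρ → HasCompactSupport ρ →
      ContinuousOn (fun t => ∫ x : ℝ, μ t x ⬝ᵥ ρ x) (Set.Icc 0 T)
  wmeas : Measurable (Function.uncurry w)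
  wint : ∀ R > (0:ℝ),
      (∫⁻ t in Set.Icc (0:ℝ) T, ∫⁻ x in Set.Icc (-R) R, ENNReal.ofReal ‖w t x‖) < ⊤
  sol : IsDistribSol T μ w

/-- Energy of a curve. -/
def energy {n : ℕ} (M : (Fin n → ℝ) → Matrix (Fin n) (Fin n) ℝ) (S : Set (Fin n → ℝ))
    (T : ℝ) (μ w : ℝ → ℝ → Fin n → ℝ) : ℝ≥0∞ :=
  ∫⁻ t in Set.Icc (0:ℝ) T, action M S (μ t) (w t)

/-- The class 𝒞_T(μ₀ → μ₁). -/
def MemCTEnds {n : ℕ} (S : Set (Fin n → ℝ)) (T : ℝ) (μ w : ℝ → ℝ → Fin n → ℝ)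
    (μ₀ μ₁ : ℝ → Fin n → ℝ) : Prop :=
  MemCT S T μ w ∧ μ 0 = μ₀ ∧ μ T = μ₁

/-- The transport distance W_M, with values in [0,∞]. -/
def WM {n : ℕ} (M : (Fin n → ℝ) → Matrix (Fin n) (Fin n) ℝ) (S : Set (Fin n → ℝ))
    (μ₀ μ₁ : ℝ → Fin n → ℝ) : ℝ≥0∞ :=
  sInf { e : ℝ≥0∞ | ∃ μ w, MemCTEnds S 1 μ w μ₀ μ₁ ∧ e = (energy M S 1 μ w) ^ (1/2 : ℝ) }

/-- Second moment ℓ₂(ν) = ∫ x² eᵀν(x) dx. -/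
def mom2 {n : ℕ} (ν : ℝ → Fin n → ℝ) : ℝ≥0∞ :=
  ∫⁻ x : ℝ, ENNReal.ofReal (x ^ 2 * ∑ j, ν x j)

/-- Hessian matrix of a scalar function on ℝⁿ. -/
def hess {n : ℕ} (h : (Fin n → ℝ) → ℝ) (z : Fin n → ℝ) : Matrix (Fin n) (Fin n) ℝ :=
  Matrix.of fun i j => fderiv ℝ (fun y => fderiv ℝ h y (Pi.single j 1)) z (Pi.single i 1)



section MyAux

variable {n : ℕ}

private lemma myIsSymm_dot {A : Matrix (Fin n) (Fin n) ℝ} (hA : A.IsSymm) (x y : Fin n → ℝ) :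
    x ⬝ᵥ (A *ᵥ y) = y ⬝ᵥ (A *ᵥ x) := by
  simp only [dotProduct, mulVec, Finset.mul_sum]
  rw [Finset.sum_comm]
  refine Finset.sum_congr rfl fun i _ => Finset.sum_congr rfl fun j _ => ?_
  rw [← hA.apply i j]
  ring

private lemma myDual_le {A : Matrix (Fin n) (Fin n) ℝ} (hA : A.PosDef) (hs : A.IsSymm)
    (p q : Fin n → ℝ) :
    2 * (q ⬝ᵥ p) - q ⬝ᵥ (A *ᵥ q) ≤ p ⬝ᵥ (A⁻¹ *ᵥ p) := by
  have hinv : A * A⁻¹ = 1 := Matrix.mul_nonsing_inv _ hA.det_pos.ne'.isUnit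
  set r := q - A⁻¹ *ᵥ p with hr
  have hAr : A *ᵥ r = A *ᵥ q - p := by
    rw [hr, Matrix.mulVec_sub, Matrix.mulVec_mulVec, hinv, Matrix.one_mulVec]
  have h0 : 0 ≤ r ⬝ᵥ (A *ᵥ r) := by
    have := hA.posSemidef.dotProduct_mulVec_nonneg r
    simpa using this
  have h1 : (A⁻¹ *ᵥ p) ⬝ᵥ (A *ᵥ q) = q ⬝ᵥ p := by
    rw [myIsSymm_dot hs, Matrix.mulVec_mulVec, hinv, Matrix.one_mulVec]
  have h2 : (A⁻¹ *ᵥ p) ⬝ᵥ p = p ⬝ᵥ (A⁻¹ *ᵥ p) := dotProduct_comm _ _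
  have hexp : r ⬝ᵥ (A *ᵥ r) =
      q ⬝ᵥ (A *ᵥ q) - q ⬝ᵥ p - (q ⬝ᵥ p) + p ⬝ᵥ (A⁻¹ *ᵥ p) := by
    rw [hAr, hr, sub_dotProduct, dotProduct_sub, dotProduct_sub, h1, h2]
    ring
  linarith

private lemma myDual_eq {A : Matrix (Fin n) (Fin n) ℝ} (hA : A.PosDef) (p : Fin n → ℝ) :
    p ⬝ᵥ (A⁻¹ *ᵥ p) =
      2 * ((A⁻¹ *ᵥ p) ⬝ᵥ p) - (A⁻¹ *ᵥ p) ⬝ᵥ (A *ᵥ (A⁻¹ *ᵥ p)) := by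
  have hinv : A * A⁻¹ = 1 := Matrix.mul_nonsing_inv _ hA.det_pos.ne'.isUnit
  rw [Matrix.mulVec_mulVec, hinv, Matrix.one_mulVec, dotProduct_comm]
  ring

private lemma myDot_expand (A : Matrix (Fin n) (Fin n) ℝ) (q : Fin n → ℝ) :
    q ⬝ᵥ (A *ᵥ q) = ∑ i, ∑ j, q i * (A i j * q j) := by
  simp [dotProduct, mulVec, Finset.mul_sum]

private lemma myQuadform_le {S : Set (Fin n → ℝ)} (hSconv : Convex ℝ S)
    {M : (Fin n → ℝ) → Matrix (Fin n) (Fin n) ℝ} (hM : IsMobility S M)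
    {z1 z2 : Fin n → ℝ} (h1 : z1 ∈ interior S) (h2 : z2 ∈ interior S)
    {a b : ℝ} (ha : 0 ≤ a) (hb : 0 ≤ b) (hab : a + b = 1) (q : Fin n → ℝ) :
    a * (q ⬝ᵥ (M z1 *ᵥ q)) + b * (q ⬝ᵥ (M z2 *ᵥ q)) ≤
      q ⬝ᵥ (M (a • z1 + b • z2) *ᵥ q) := by
  set ζ : Fin n → ℝ := z2 - z1 with hζ
  set line : ℝ → (Fin n → ℝ) := fun t => z1 + t • ζ with hline
  have hlinecd : ContDiff ℝ (⊤ : ℕ∞) line :=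
    contDiff_const.add (contDiff_id.smul contDiff_const)
  set U : Set ℝ := line ⁻¹' (interior S) with hUdef
  have hUopen : IsOpen U := isOpen_interior.preimage hlinecd.continuous
  have hconvInt : Convex ℝ (interior S) := hSconv.interior
  have hIccU : Set.Icc (0:ℝ) 1 ⊆ U := by
    intro t ht
    have hlt : line t = (1 - t) • z1 + t • z2 := by
      simp only [hline, hζ]; module
    simp only [hUdef, Set.mem_preimage, hlt]
    exact hconvInt h1 h2 (by linarith [ht.2]) ht.1 (by ring)
  set u : Fin n → Fin n → ℝ → ℝ := fun i j t => M (line t) i j with hu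
  have hucd : ∀ i j, ContDiffOn ℝ (⊤ : ℕ∞) (u i j) U := fun i j =>
    (hM.smooth i j).comp hlinecd.contDiffOn (fun t ht => ht)
  have hu'cd : ∀ i j, ContDiffOn ℝ (⊤ : ℕ∞) (deriv (u i j)) U := fun i j =>
    (hucd i j).deriv_of_isOpen hUopen (by simp)
  set g : ℝ → ℝ := fun t => ∑ i, ∑ j, q i * (u i j t * q j) with hg
  set g1 : ℝ → ℝ := fun t => ∑ i, ∑ j, q i * (deriv (u i j) t * q j) with hg1
  set g2 : ℝ → ℝ := fun t => ∑ i, ∑ j, q i * (deriv (deriv (u i j)) t * q j) with hg2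
  have hgcd : ContDiffOn ℝ (⊤ : ℕ∞) g U :=
    ContDiffOn.sum fun i _ => ContDiffOn.sum fun j _ =>
      contDiffOn_const.mul ((hucd i j).mul contDiffOn_const)
  have hd : ∀ t ∈ U, HasDerivAt g (g1 t) t := by
    intro t ht
    apply HasDerivAt.fun_sum; intro i _
    apply HasDerivAt.fun_sum; intro j _
    exact ((((hucd i j).differentiableOn (by simp)).differentiableAt
      (hUopen.mem_nhds ht)).hasDerivAt.mul_const (q j)).const_mul (q i)
  have hd2 : ∀ t ∈ U, HasDerivAt g1 (g2 t) t := by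
    intro t ht
    apply HasDerivAt.fun_sum; intro i _
    apply HasDerivAt.fun_sum; intro j _
    exact ((((hu'cd i j).differentiableOn (by simp)).differentiableAt
      (hUopen.mem_nhds ht)).hasDerivAt.mul_const (q j)).const_mul (q i)
  have hev : ∀ t ∈ U, deriv g =ᶠ[𝓝 t] g1 := by
    intro t ht
    filter_upwards [hUopen.mem_nhds ht] with s hs using (hd s hs).deriv
  have hderiv2 : ∀ t ∈ U, deriv (deriv g) t = g2 t := by
    intro t ht
    rw [(hev t ht).deriv_eq]
    exact (hd2 t ht).deriv
  have harg : ∀ (t₀ s r : ℝ), line t₀ + r • ζ + s • ζ = line ((t₀ + s) + r) := by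
    intro t₀ s r; simp only [hline]; module
  have hkey : ∀ (i j : Fin n) (t₀ : ℝ),
      matDirDeriv2 M (line t₀) ζ ζ i j = deriv (deriv (u i j)) t₀ := by
    intro i j t₀
    simp only [matDirDeriv2, Matrix.of_apply]
    have hders : ∀ s : ℝ, deriv (fun r : ℝ => M (line t₀ + r • ζ + s • ζ) i j) 0
        = deriv (u i j) (t₀ + s) := by
      intro s
      have hfe : (fun r : ℝ => M (line t₀ + r • ζ + s • ζ) i j)
          = fun r : ℝ => u i j ((t₀ + s) + r) := by
        funext r; simp only [hu]; rw [harg]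
      rw [hfe, deriv_comp_const_add, add_zero]
    have hfe2 : (fun s : ℝ => deriv (fun r : ℝ => M (line t₀ + r • ζ + s • ζ) i j) 0)
        = fun s : ℝ => deriv (u i j) (t₀ + s) := funext hders
    rw [hfe2, deriv_comp_const_add, add_zero]
  have hnonpos : ∀ t ∈ U, deriv (deriv g) t ≤ 0 := by
    intro t ht
    rw [hderiv2 t ht]
    have hps := (hM.concave (line t) ht ζ).dotProduct_mulVec_nonneg q
    have hq : q ⬝ᵥ (matDirDeriv2 M (line t) ζ ζ *ᵥ q) ≤ 0 := by
      rw [Matrix.neg_mulVec, dotProduct_neg] at hps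
      simpa using hps
    calc g2 t = q ⬝ᵥ (matDirDeriv2 M (line t) ζ ζ *ᵥ q) := by
          rw [myDot_expand]
          exact Finset.sum_congr rfl fun i _ => Finset.sum_congr rfl fun j _ => by
            rw [hkey i j t]
      _ ≤ 0 := hq
  have hconc : ConcaveOn ℝ (Set.Icc (0:ℝ) 1) g := by
    apply concaveOn_of_deriv2_nonpos (convex_Icc 0 1)
    · exact hgcd.continuousOn.mono hIccU
    · intro t ht
      exact ((hd t (hIccU (interior_subset ht))).differentiableAt).differentiableWithinAt
    · intro t ht
      have htU : t ∈ U := hIccU (interior_subset ht)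
      have : DifferentiableAt ℝ g1 t := (hd2 t htU).differentiableAt
      exact (this.congr_of_eventuallyEq (hev t htU)).differentiableWithinAt
    · intro t ht
      have htU : t ∈ U := hIccU (interior_subset ht)
      simpa [Function.iterate_succ, Function.comp] using hnonpos t htU
  have hmem0 : (0:ℝ) ∈ Set.Icc (0:ℝ) 1 := by norm_num
  have hmem1 : (1:ℝ) ∈ Set.Icc (0:ℝ) 1 := by norm_num
  have hcc := hconc.2 hmem0 hmem1 ha hb hab
  have hsm : a • (0:ℝ) + b • (1:ℝ) = b := by simp
  rw [hsm] at hcc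
  have hl0 : line 0 = z1 := by simp [hline]
  have hl1 : line 1 = z2 := by simp [hline, hζ]
  have hlb : line b = a • z1 + b • z2 := by
    simp only [hline, hζ]
    rw [show a = 1 - b by linarith]
    module
  have hg0 : g 0 = q ⬝ᵥ (M z1 *ᵥ q) := by
    rw [myDot_expand]; simp only [hg, hu, hl0]
  have hg1' : g 1 = q ⬝ᵥ (M z2 *ᵥ q) := by
    rw [myDot_expand]; simp only [hg, hu, hl1]
  have hgb : g b = q ⬝ᵥ (M (a • z1 + b • z2) *ᵥ q) := by
    rw [myDot_expand]; simp only [hg, hu, hlb]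
  rw [hg0, hg1', hgb] at hcc
  simpa [smul_eq_mul] using hcc

end MyAux

/-- properties of the action density. -/
theorem action_density_properties {n : ℕ} (hn : 1 ≤ n)
    (S : Set (Fin n → ℝ)) (hSconv : Convex ℝ S) (hScomp : IsCompact S)
    (hSint : (interior S).Nonempty)
    (M : (Fin n → ℝ) → Matrix (Fin n) (Fin n) ℝ) (hM : IsMobility S M) :
    (ContinuousOn (fun q : (Fin n → ℝ) × (Fin n → ℝ) => actDens M q.1 q.2)
        ((interior S) ×ˢ (Set.univ : Set (Fin n → ℝ))) ∧
      ConvexOn ℝ ((interior S) ×ˢ (Set.univ : Set (Fin n → ℝ)))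
        (fun q : (Fin n → ℝ) × (Fin n → ℝ) => actDens M q.1 q.2)) ∧
    (∀ z ∈ interior S, ∀ p : Fin n → ℝ, p ≠ 0 → 0 < actDens M z p) ∧
    (∀ z ∈ interior S, ∀ p : Fin n → ℝ, ∀ c : ℝ,
      actDens M z (c • p) = c ^ 2 * actDens M z p) := by
  have hconvInt : Convex ℝ (interior S) := hSconv.interior
  have hMc : ContinuousOn (fun q : (Fin n → ℝ) × (Fin n → ℝ) => M q.1)
      ((interior S) ×ˢ (Set.univ : Set (Fin n → ℝ))) := by
    apply continuousOn_pi.2; intro i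
    apply continuousOn_pi.2; intro j
    exact ((hM.smooth i j).continuousOn).comp continuous_fst.continuousOn
      (fun q hq => hq.1)
  have hdetc : ContinuousOn (fun q : (Fin n → ℝ) × (Fin n → ℝ) => (M q.1).det)
      ((interior S) ×ˢ (Set.univ : Set (Fin n → ℝ))) :=
    (continuous_id.matrix_det).comp_continuousOn hMc
  have hadjc : ContinuousOn (fun q : (Fin n → ℝ) × (Fin n → ℝ) => (M q.1).adjugate)
      ((interior S) ×ˢ (Set.univ : Set (Fin n → ℝ))) :=
    (continuous_id.matrix_adjugate).comp_continuousOn hMc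
  have hrw : ∀ (z p : Fin n → ℝ),
      actDens M z p = ((M z).det)⁻¹ * (p ⬝ᵥ ((M z).adjugate *ᵥ p)) := by
    intro z p
    rw [actDens, Matrix.inv_def, Ring.inverse_eq_inv', Matrix.smul_mulVec,
      dotProduct_smul, smul_eq_mul]
  refine ⟨⟨?_, ?_⟩, ?_, ?_⟩
  · -- continuity
    have hbil : ContinuousOn (fun q : (Fin n → ℝ) × (Fin n → ℝ) =>
        ∑ i, ∑ j, q.2 i * ((M q.1).adjugate i j * q.2 j))
        ((interior S) ×ˢ (Set.univ : Set (Fin n → ℝ))) := by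
      refine continuousOn_finset_sum _ fun i _ => ?_
      refine continuousOn_finset_sum _ fun j _ => ?_
      refine ContinuousOn.mul ?_ (ContinuousOn.mul ?_ ?_)
      · exact ((continuous_apply i).comp continuous_snd).continuousOn
      · exact (((continuous_apply j).comp (continuous_apply i)).comp_continuousOn hadjc)
      · exact ((continuous_apply j).comp continuous_snd).continuousOn
    have hbig : ContinuousOn (fun q : (Fin n → ℝ) × (Fin n → ℝ) =>
        ((M q.1).det)⁻¹ * (∑ i, ∑ j, q.2 i * ((M q.1).adjugate i j * q.2 j)))
        ((interior S) ×ˢ (Set.univ : Set (Fin n → ℝ))) :=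
      (hdetc.inv₀ (fun q hq => (hM.posDef q.1 hq.1).det_pos.ne')).mul hbil
    refine hbig.congr fun q _ => ?_
    rw [hrw q.1 q.2, myDot_expand]
  · -- convexity
    refine ⟨hconvInt.prod convex_univ, ?_⟩
    rintro x hx y hy a b ha hb hab
    have hx1 : x.1 ∈ interior S := hx.1
    have hy1 : y.1 ∈ interior S := hy.1
    have hfst : (a • x + b • y).1 = a • x.1 + b • y.1 := rfl
    have hsnd : (a • x + b • y).2 = a • x.2 + b • y.2 := rfl
    set zm : Fin n → ℝ := a • x.1 + b • y.1 with hzm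
    have hzmS : zm ∈ interior S := hconvInt hx1 hy1 ha hb hab
    set pm : Fin n → ℝ := a • x.2 + b • y.2 with hpm
    set qs : Fin n → ℝ := (M zm)⁻¹ *ᵥ pm with hqs
    have heq : actDens M zm pm = 2 * (qs ⬝ᵥ pm) - qs ⬝ᵥ (M zm *ᵥ qs) := by
      have := myDual_eq (hM.posDef zm hzmS) pm
      rw [actDens, this, hqs, dotProduct_comm]
    have hquad := myQuadform_le hSconv hM hx1 hy1 ha hb hab qs
    have h3 : 2 * (qs ⬝ᵥ x.2) - qs ⬝ᵥ (M x.1 *ᵥ qs) ≤ actDens M x.1 x.2 :=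
      myDual_le (hM.posDef x.1 hx1) (hM.symm x.1 hx1) x.2 qs
    have h4 : 2 * (qs ⬝ᵥ y.2) - qs ⬝ᵥ (M y.1 *ᵥ qs) ≤ actDens M y.1 y.2 :=
      myDual_le (hM.posDef y.1 hy1) (hM.symm y.1 hy1) y.2 qs
    have hdot : qs ⬝ᵥ pm = a * (qs ⬝ᵥ x.2) + b * (qs ⬝ᵥ y.2) := by
      rw [hpm, dotProduct_add, dotProduct_smul, dotProduct_smul, smul_eq_mul, smul_eq_mul]
    have h3' := mul_le_mul_of_nonneg_left h3 ha
    have h4' := mul_le_mul_of_nonneg_left h4 hb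
    rw [← hzm] at hquad
    show actDens M zm pm ≤ a • actDens M x.1 x.2 + b • actDens M y.1 y.2
    rw [smul_eq_mul, smul_eq_mul, heq, hdot]
    nlinarith [hquad]
  · -- positivity
    intro z hz p hp
    have h := (Matrix.PosDef.inv (hM.posDef z hz)).dotProduct_mulVec_pos hp
    simpa [actDens] using h
  · -- homogeneity
    intro z hz p c
    simp only [actDens, Matrix.mulVec_smul, dotProduct_smul, smul_dotProduct,
      smul_eq_mul]
    ring

end
end

section
/- Let S = { z ∈ [0,1]ⁿ : 1 − Σ_{j=1}^n z_j ≥ 0 } be the n-th standard simplex and define h : int S → ℝ by h(z) = Σ_{j=1}^n z_j log z_j + (1 − Σ_{j=1}^n z_j) log(1 − Σ_{j=1}^n z_j), and M : S → ℝ^{n×n} by M(z) = diag(z₁,…,z_n) − z zᵀ. Then: (i) M(z) = (∇²h(z))⁻¹ for every z ∈ int S; (ii) M(z) is symmetric positive definite for every z ∈ int S; (iii) for every z ∈ int S and ζ ∈ ℝⁿ, D²M(z)[ζ,ζ] = −2 ζ ζᵀ, which is negative semidefinite; (iv) M(z)ν = 0 whenever z ∈ ∂S and ν is a normal vector to ∂S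 at z. In particular M satisfies conditions (C0)–(C3). -/
open MeasureTheory Filter Topology Set Matrix
open scoped ENNReal

noncomputable section

section SimplexMobAux

variable {n : ℕ}

private lemma aux_isHermitian_of_isSymm {A : Matrix (Fin n) (Fin n) ℝ} (h : A.IsSymm) :
    A.IsHermitian := by
  show Aᴴ = A
  rw [Matrix.conjTranspose_eq_transpose_of_trivial]
  exact h

private lemma aux_quadform (z x : Fin n → ℝ) :
    x ⬝ᵥ ((Matrix.diagonal z - Matrix.vecMulVec z z) *ᵥ x)
      = (∑ i, z i * x i ^ 2) - (∑ i, z i * x i) ^ 2 := by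
  have hmv : ∀ i, ((Matrix.diagonal z - Matrix.vecMulVec z z) *ᵥ x) i
      = z i * x i - z i * (∑ j, z j * x j) := by
    intro i
    simp only [Matrix.sub_mulVec, Pi.sub_apply, Matrix.mulVec_diagonal]
    congr 1
    simp only [Matrix.mulVec, dotProduct, Matrix.vecMulVec_apply, Finset.mul_sum]
    exact Finset.sum_congr rfl fun k _ => by ring
  simp only [dotProduct, hmv, mul_sub]
  rw [Finset.sum_sub_distrib]
  congr 1
  · exact Finset.sum_congr rfl fun i _ => by ring
  · rw [sq]
    rw [Finset.sum_mul]
    exact Finset.sum_congr rfl fun i _ => by ring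

end SimplexMobAux

/-- the volume-filling mobility on the standard simplex. -/
theorem simplex_mobility {n : ℕ} (hn : 1 ≤ n)
    (S : Set (Fin n → ℝ))
    (hS : S = {z : Fin n → ℝ | (∀ j, 0 ≤ z j ∧ z j ≤ 1) ∧ 0 ≤ 1 - ∑ j, z j})
    (h : (Fin n → ℝ) → ℝ)
    (hh : ∀ z ∈ interior S,
      h z = (∑ j, z j * Real.log (z j)) + (1 - ∑ j, z j) * Real.log (1 - ∑ j, z j))
    (M : (Fin n → ℝ) → Matrix (Fin n) (Fin n) ℝ)
    (hMdef : ∀ z, M z = Matrix.diagonal z - Matrix.vecMulVec z z) :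
    -- (i) M is the inverse Hessian of h on the interior
    (∀ z ∈ interior S, M z = (hess h z)⁻¹) ∧
    -- (ii) symmetry and positive definiteness on the interior
    (∀ z ∈ interior S, (M z).IsSymm ∧ (M z).PosDef) ∧
    -- (iii) the second directional derivative is −2ζζᵀ, negative semidefinite
    (∀ z ∈ interior S, ∀ ζ : Fin n → ℝ,
      matDirDeriv2 M z ζ ζ = (-2 : ℝ) • Matrix.vecMulVec ζ ζ ∧
      (-(matDirDeriv2 M z ζ ζ)).PosSemidef) ∧
    -- (iv) M annihilates normal vectors at the boundary
    MobC3 S M ∧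
    -- in particular, M satisfies (C0)-(C3)
    IsMobility S M := by
  -- notation
  have hσcont : Continuous (fun y : Fin n → ℝ => ∑ j, y j) :=
    continuous_finset_sum _ fun j _ => continuous_apply j
  -- S is closed
  have hScl : IsClosed S := by
    rw [hS]
    have : {z : Fin n → ℝ | (∀ j, 0 ≤ z j ∧ z j ≤ 1) ∧ 0 ≤ 1 - ∑ j, z j}
        = (⋂ j, {z : Fin n → ℝ | 0 ≤ z j} ∩ {z : Fin n → ℝ | z j ≤ 1})
          ∩ {z : Fin n → ℝ | 0 ≤ 1 - ∑ j, z j} := by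
      ext z; simp [forall_and]
    rw [this]
    refine IsClosed.inter (isClosed_iInter fun j => ?_) ?_
    · exact (isClosed_le continuous_const (continuous_apply j)).inter
        (isClosed_le (continuous_apply j) continuous_const)
    · exact isClosed_le continuous_const (continuous_const.sub hσcont)
  -- interior points are strictly inside
  have hint : ∀ z ∈ interior S, (∀ j, 0 < z j) ∧ ∑ j, z j < 1 := by
    intro z hz
    rcases Metric.mem_nhds_iff.1 (mem_interior_iff_mem_nhds.1 hz) with ⟨ε, hε, hball⟩
    have hmem : ∀ w : Fin n → ℝ, dist w z < ε → w ∈ S := fun w hw => hball hw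
    constructor
    · intro j
      have h1 : Function.update z j (z j - ε / 2) ∈ S := by
        apply hmem
        rw [dist_pi_lt_iff hε]
        intro i
        rcases eq_or_ne i j with rfl | hij
        · rw [Function.update_self, Real.dist_eq,
            show z i - ε / 2 - z i = -(ε / 2) by ring, abs_neg, abs_of_pos (by linarith)]
          linarith
        · simp [Function.update_of_ne hij, hε]
      rw [hS] at h1
      have := (h1.1 j).1
      rw [Function.update_self] at this
      linarith
    · have j0 : Fin n := ⟨0, hn⟩
      have h1 : Function.update z j0 (z j0 + ε / 2) ∈ S := by
        apply hmem
        rw [dist_pi_lt_iff hε]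
        intro i
        rcases eq_or_ne i j0 with rfl | hij
        · rw [Function.update_self, Real.dist_eq,
            show z i + ε / 2 - z i = ε / 2 by ring, abs_of_pos (by linarith)]
          linarith
        · simp [Function.update_of_ne hij, hε]
      rw [hS] at h1
      have h2 := h1.2
      rw [Finset.sum_update_of_mem (Finset.mem_univ j0)] at h2
      rw [Finset.sum_sdiff_eq_sub (Finset.subset_univ _), Finset.sum_singleton] at h2
      linarith
  -- entry formula
  have hE : ∀ (w : Fin n → ℝ) (i j : Fin n),
      M w i j = (if i = j then w i else 0) - w i * w j := by
    intro w i j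
    rw [hMdef]
    simp [Matrix.sub_apply, Matrix.diagonal_apply, Matrix.vecMulVec_apply]
  -- symmetry
  have hSymm : ∀ w : Fin n → ℝ, (M w).IsSymm := by
    intro w
    rw [hMdef]
    refine (Matrix.isSymm_diagonal w).sub ?_
    show _ = _
    ext i j
    simp [Matrix.transpose_apply, Matrix.vecMulVec_apply, mul_comm]
  -- positive definiteness
  have hPos : ∀ z ∈ interior S, (M z).PosDef := by
    intro z hz
    obtain ⟨hz1, hz2⟩ := hint z hz
    refine Matrix.posDef_iff_dotProduct_mulVec.mpr ⟨aux_isHermitian_of_isSymm (hSymm z), ?_⟩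
    intro x hx
    have hstar : star x = x := funext fun i => by simp
    rw [hstar, hMdef, aux_quadform]
    obtain ⟨i0, hi0⟩ : ∃ i, x i ≠ 0 := by
      by_contra hc
      push_neg at hc
      exact hx (funext hc)
    have hA : 0 < ∑ i, z i * x i ^ 2 := by
      refine Finset.sum_pos' (fun i _ => mul_nonneg (hz1 i).le (sq_nonneg _)) ?_
      refine ⟨i0, Finset.mem_univ _, mul_pos (hz1 i0) ?_⟩
      exact lt_of_le_of_ne (sq_nonneg _) (Ne.symm (pow_ne_zero 2 hi0))
    have hCS : (∑ i, z i * x i) ^ 2 ≤ (∑ i, z i) * ∑ i, z i * x i ^ 2 := by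
      refine Finset.sum_sq_le_sum_mul_sum_of_sq_eq_mul _
        (fun i _ => (hz1 i).le) (fun i _ => mul_nonneg (hz1 i).le (sq_nonneg _))
        (fun i _ => by ring)
    nlinarith [mul_pos (sub_pos.2 hz2) hA]
  -- second directional derivative
  have hD2 : ∀ z ∈ interior S, ∀ ζ : Fin n → ℝ,
      matDirDeriv2 M z ζ ζ = (-2 : ℝ) • Matrix.vecMulVec ζ ζ ∧
      (-(matDirDeriv2 M z ζ ζ)).PosSemidef := by
    intro z hz ζ
    have hbase : ∀ (s : ℝ) (k : Fin n),
        HasDerivAt (fun t : ℝ => (z + t • ζ + s • ζ) k) (ζ k) 0 := by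
      intro s k
      have e : (fun t : ℝ => (z + t • ζ + s • ζ) k) = fun t => (z k + s * ζ k) + t * ζ k := by
        funext t
        simp only [Pi.add_apply, Pi.smul_apply, smul_eq_mul]
        ring
      rw [e]
      exact (hasDerivAt_mul_const _).const_add _
    have hval : ∀ (s : ℝ) (k : Fin n), (z + (0:ℝ) • ζ + s • ζ) k = z k + s * ζ k := by
      intro s k
      simp [Pi.add_apply, Pi.smul_apply, smul_eq_mul]
    have hinner : ∀ (s : ℝ) (i j : Fin n),
        deriv (fun t : ℝ => M (z + t • ζ + s • ζ) i j) 0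
          = (if i = j then ζ i else 0)
            - (ζ i * (z j + s * ζ j) + (z i + s * ζ i) * ζ j) := by
      intro s i j
      have e : (fun t : ℝ => M (z + t • ζ + s • ζ) i j)
          = fun t => (if i = j then (z + t • ζ + s • ζ) i else 0)
              - (z + t • ζ + s • ζ) i * (z + t • ζ + s • ζ) j := by
        funext t
        exact hE _ i j
      rw [e]
      have h1 : HasDerivAt (fun t : ℝ => if i = j then (z + t • ζ + s • ζ) i else 0)
          (if i = j then ζ i else 0) 0 := by
        by_cases hij : i = j
        · simpa [hij] using hbase s i
        · simpa [hij] using hasDerivAt_const (0:ℝ) (0:ℝ)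
      have h2 := (hbase s i).mul (hbase s j)
      rw [hval s i, hval s j] at h2
      exact (h1.sub h2).deriv
    have houter : ∀ i j : Fin n, matDirDeriv2 M z ζ ζ i j = -2 * (ζ i * ζ j) := by
      intro i j
      show deriv (fun s : ℝ => deriv (fun t : ℝ => M (z + t • ζ + s • ζ) i j) 0) 0 = _
      have e : (fun s : ℝ => deriv (fun t : ℝ => M (z + t • ζ + s • ζ) i j) 0)
          = fun s => (if i = j then ζ i else 0)
              - (ζ i * (z j + s * ζ j) + (z i + s * ζ i) * ζ j) := by
        funext s
        exact hinner s i j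
      rw [e]
      have hA : HasDerivAt (fun s : ℝ => ζ i * (z j + s * ζ j)) (ζ i * ζ j) 0 :=
        ((hasDerivAt_mul_const (ζ j)).const_add (z j)).const_mul (ζ i)
      have hB : HasDerivAt (fun s : ℝ => (z i + s * ζ i) * ζ j) (ζ i * ζ j) 0 :=
        ((hasDerivAt_mul_const (ζ i)).const_add (z i)).mul_const (ζ j)
      have hD : HasDerivAt (fun s : ℝ => (if i = j then ζ i else 0)
          - (ζ i * (z j + s * ζ j) + (z i + s * ζ i) * ζ j)) (0 - (ζ i * ζ j + ζ i * ζ j)) 0 :=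
        (hasDerivAt_const (0:ℝ) (if i = j then ζ i else 0)).sub (hA.add hB)
      rw [hD.deriv]
      ring
    have heq : matDirDeriv2 M z ζ ζ = (-2 : ℝ) • Matrix.vecMulVec ζ ζ := by
      ext i j
      rw [houter i j, Matrix.smul_apply, Matrix.vecMulVec_apply, smul_eq_mul]
    refine ⟨heq, ?_⟩
    rw [heq]
    have hneg : -((-2 : ℝ) • Matrix.vecMulVec ζ ζ) = (2 : ℝ) • Matrix.vecMulVec ζ ζ := by
      rw [← neg_smul]
      norm_num
    rw [hneg]
    rw [Matrix.posSemidef_iff_dotProduct_mulVec]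
    constructor
    · apply aux_isHermitian_of_isSymm
      show _ = _
      ext i j
      simp only [Matrix.transpose_apply, Matrix.smul_apply, Matrix.vecMulVec_apply, smul_eq_mul]
      ring
    · intro x
      have hstar : star x = x := funext fun i => by simp
      rw [hstar]
      have hq : x ⬝ᵥ (((2:ℝ) • Matrix.vecMulVec ζ ζ) *ᵥ x) = 2 * (∑ i, ζ i * x i) ^ 2 := by
        rw [Matrix.smul_mulVec, dotProduct_smul, smul_eq_mul]
        congr 1
        have : x ⬝ᵥ (Matrix.vecMulVec ζ ζ *ᵥ x) = ∑ i, ∑ j, (ζ i * x i) * (ζ j * x j) := by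
          simp only [Matrix.mulVec, dotProduct, Matrix.vecMulVec_apply, Finset.mul_sum]
          exact Finset.sum_congr rfl fun i _ => Finset.sum_congr rfl fun j _ => by ring
        rw [this, sq, Finset.sum_mul_sum]
      rw [hq]
      positivity
  -- condition C3
  have hC3 : MobC3 S M := by
    intro z hz ν hν
    have hzS : z ∈ S := by
      have h1 := frontier_subset_closure (s := S) hz
      rwa [hScl.closure_eq] at h1
    rw [hS] at hzS
    obtain ⟨hz01, hzsum⟩ := hzS
    funext i
    have hMv : (M z *ᵥ ν) i = z i * (ν i - ν ⬝ᵥ z) := by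
      rw [hMdef]
      simp only [Matrix.sub_mulVec, Pi.sub_apply, Matrix.mulVec_diagonal]
      have hvv : (Matrix.vecMulVec z z *ᵥ ν) i = z i * (ν ⬝ᵥ z) := by
        simp only [Matrix.mulVec, dotProduct, Matrix.vecMulVec_apply, Finset.mul_sum]
        exact Finset.sum_congr rfl fun j _ => by ring
      rw [hvv]
      ring
    rw [Pi.zero_apply, hMv]
    rcases eq_or_lt_of_le (hz01 i).1 with hzi | hzi
    · rw [← hzi]
      ring
    · have key1 : ν i - ν ⬝ᵥ z ≤ 0 := by
        have hy : Pi.single i 1 ∈ S := by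
          rw [hS]
          refine ⟨fun j => ?_, ?_⟩
          · rcases eq_or_ne j i with rfl | hji
            · simp
            · simp [Pi.single_eq_of_ne hji]
          · simp [Finset.sum_pi_single']
        have h1 := hν _ hy
        rwa [dotProduct_sub, dotProduct_single_one] at h1
      have key2 : ν ⬝ᵥ z ≤ ν i := by
        set y : Fin n → ℝ := fun j => (1 + z i) * z j - z i * (Pi.single i 1 : Fin n → ℝ) j with hy
        have hynn : ∀ j, 0 ≤ y j := by
          intro j
          rcases eq_or_ne j i with rfl | hji
          · simp only [hy, Pi.single_eq_same, mul_one]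
            nlinarith [(hz01 j).1]
          · simp only [hy, Pi.single_eq_of_ne hji, mul_zero, sub_zero]
            nlinarith [(hz01 j).1]
        have hysum : ∑ j, y j = (1 + z i) * (∑ j, z j) - z i := by
          simp only [hy]
          rw [Finset.sum_sub_distrib, ← Finset.mul_sum, ← Finset.mul_sum,
            Finset.sum_pi_single']
          simp
        have hysum1 : ∑ j, y j ≤ 1 := by
          rw [hysum]
          nlinarith [(hz01 i).1]
        have hyS : y ∈ S := by
          rw [hS]
          refine ⟨fun j => ⟨hynn j, ?_⟩, by linarith⟩
          calc y j ≤ ∑ k, y k := Finset.single_le_sum (fun k _ => hynn k) (Finset.mem_univ j)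
          _ ≤ 1 := hysum1
        have h1 := hν _ hyS
        have h2 : ν ⬝ᵥ (y - z) = z i * (ν ⬝ᵥ z) - z i * ν i := by
          have hyz : ∀ j, (y - z) j = z i * z j - z i * (Pi.single i 1 : Fin n → ℝ) j := by
            intro j
            simp only [Pi.sub_apply, hy]
            ring
          simp only [dotProduct, hyz, mul_sub, Finset.sum_sub_distrib]
          congr 1
          · rw [Finset.mul_sum]
            exact Finset.sum_congr rfl fun j _ => by ring
          · simp only [Pi.single_apply, mul_ite, mul_one, mul_zero]
            rw [Finset.sum_ite_eq' Finset.univ i (fun j => ν j * z i)]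
            simp [mul_comm]
        rw [h2] at h1
        nlinarith
      have : ν i = ν ⬝ᵥ z := le_antisymm (by linarith) key2
      rw [this]
      ring
  -- smoothness of the entries
  have hsmooth : ∀ i j : Fin n, ContDiff ℝ (⊤ : ℕ∞) (fun w : Fin n → ℝ => M w i j) := by
    intro i j
    have e : (fun w : Fin n → ℝ => M w i j)
        = fun w => (if i = j then w i else 0) - w i * w j := by
      funext w
      exact hE w i j
    rw [e]
    have hp : ∀ k : Fin n, ContDiff ℝ (⊤ : ℕ∞) (fun w : Fin n → ℝ => w k) := fun k =>
      (ContinuousLinearMap.proj k : (Fin n → ℝ) →L[ℝ] ℝ).contDiff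
    by_cases hij : i = j
    · simp only [if_pos hij]
      exact (hp i).sub ((hp i).mul (hp j))
    · simp only [if_neg hij]
      exact contDiff_const.sub ((hp i).mul (hp j))
  -- part (i)
  have hUo : IsOpen (interior S) := isOpen_interior
  have hInv : ∀ z ∈ interior S, M z = (hess h z)⁻¹ := by
    intro z hz
    obtain ⟨hz1, hz2⟩ := hint z hz
    have h1σz : (0:ℝ) < 1 - ∑ k, z k := by linarith
    set T : (Fin n → ℝ) →L[ℝ] ℝ := ∑ j, ContinuousLinearMap.proj j with hT
    have hTapp : ∀ v : Fin n → ℝ, T v = ∑ j, v j := by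
      intro v
      simp [hT, ContinuousLinearMap.sum_apply]
    have hproj : ∀ (k : Fin n) (y : Fin n → ℝ), HasFDerivAt (fun w : Fin n → ℝ => w k)
        (ContinuousLinearMap.proj k : (Fin n → ℝ) →L[ℝ] ℝ) y := fun k y =>
      (ContinuousLinearMap.proj k : (Fin n → ℝ) →L[ℝ] ℝ).hasFDerivAt
    have hm : ∀ y : Fin n → ℝ, HasFDerivAt (fun w : Fin n → ℝ => 1 - ∑ j, w j) (-T) y := by
      intro y
      have h0 : HasFDerivAt (fun w : Fin n → ℝ => T w) T y := T.hasFDerivAt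
      have h2 : HasFDerivAt (fun w : Fin n → ℝ => 1 - T w) (0 - T) y := (hasFDerivAt_const (1:ℝ) y).sub h0
      have e : (fun w : Fin n → ℝ => 1 - ∑ j, w j) = fun w => 1 - T w := by
        funext w
        rw [hTapp]
      rw [e]
      simpa using h2
    -- gradient of h on the interior
    have hgrad : ∀ y ∈ interior S, HasFDerivAt h
        ((∑ j, (Real.log (y j) + 1) • (ContinuousLinearMap.proj j : (Fin n → ℝ) →L[ℝ] ℝ))
          + (Real.log (1 - ∑ j, y j) + 1) • (-T)) y := by
      intro y hy
      obtain ⟨hy1, hy2⟩ := hint y hy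
      have h1σ : (0:ℝ) < 1 - ∑ j, y j := by linarith
      have hφ : ∀ a : ℝ, a ≠ 0 → HasDerivAt (fun a : ℝ => a * Real.log a) (Real.log a + 1) a := by
        intro a ha
        have h0 : HasDerivAt (fun a : ℝ => a * Real.log a) (1 * Real.log a + a * a⁻¹) a := (hasDerivAt_id a).mul (Real.hasDerivAt_log ha)
        simpa [mul_inv_cancel₀ ha, add_comm] using h0
      have hterm : ∀ j : Fin n, HasFDerivAt (fun w : Fin n → ℝ => w j * Real.log (w j))
          ((Real.log (y j) + 1) • (ContinuousLinearMap.proj j : (Fin n → ℝ) →L[ℝ] ℝ)) y := by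
        intro j
        exact (hφ (y j) (ne_of_gt (hy1 j))).comp_hasFDerivAt y (hproj j y)
      have hsum : HasFDerivAt (fun w : Fin n → ℝ => ∑ j, w j * Real.log (w j))
          (∑ j, (Real.log (y j) + 1) • (ContinuousLinearMap.proj j : (Fin n → ℝ) →L[ℝ] ℝ)) y :=
        HasFDerivAt.fun_sum fun j _ => hterm j
      have hg : HasFDerivAt (fun w : Fin n → ℝ => (1 - ∑ j, w j) * Real.log (1 - ∑ j, w j))
          ((Real.log (1 - ∑ j, y j) + 1) • (-T)) y :=
        by have := (hφ (1 - ∑ j, y j) (ne_of_gt h1σ)).comp_hasFDerivAt y (hm y); exact this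
      have hH := hsum.add hg
      refine hH.congr_of_eventuallyEq ?_
      exact Filter.eventuallyEq_of_mem (hUo.mem_nhds hy) hh
    -- first partial derivatives of h on the interior
    have hpart : ∀ j : Fin n, ∀ y ∈ interior S, fderiv ℝ h y (Pi.single j 1)
        = Real.log (y j) - Real.log (1 - ∑ k, y k) := by
      intro j y hy
      rw [(hgrad y hy).fderiv]
      have e1 : ∀ k : Fin n,
          (ContinuousLinearMap.proj k : (Fin n → ℝ) →L[ℝ] ℝ) (Pi.single j 1)
            = if k = j then (1:ℝ) else 0 := by
        intro k
        simp [Pi.single_apply]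
      have e2 : T (Pi.single j 1) = 1 := by
        rw [hTapp, Finset.sum_pi_single']
        simp
      rw [ContinuousLinearMap.add_apply, ContinuousLinearMap.sum_apply]
      simp only [ContinuousLinearMap.smul_apply, ContinuousLinearMap.neg_apply, e2, e1,
        smul_eq_mul, mul_ite, mul_one, mul_zero]
      rw [Finset.sum_ite_eq' Finset.univ j (fun k => Real.log (y k) + 1)]
      simp only [Finset.mem_univ, if_true]
      ring
    -- the Hessian of h
    have hhess : hess h z = Matrix.of fun i j =>
        (if i = j then (z j)⁻¹ else 0) + (1 - ∑ k, z k)⁻¹ := by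
      have hmat : ∀ i j : Fin n, hess h z i j
          = (if i = j then (z j)⁻¹ else 0) + (1 - ∑ k, z k)⁻¹ := by
        intro i j
        have hev : (fun y => fderiv ℝ h y (Pi.single j 1))
            =ᶠ[𝓝 z] fun y => Real.log (y j) - Real.log (1 - ∑ k, y k) :=
          Filter.eventuallyEq_of_mem (hUo.mem_nhds hz) (fun y hy => hpart j y hy)
        have hfd : HasFDerivAt (fun y : Fin n → ℝ => Real.log (y j) - Real.log (1 - ∑ k, y k))
            ((z j)⁻¹ • (ContinuousLinearMap.proj j : (Fin n → ℝ) →L[ℝ] ℝ)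
              - (1 - ∑ k, z k)⁻¹ • (-T)) z := by
          have hf1 : HasFDerivAt (fun y : Fin n → ℝ => Real.log (y j))
              ((z j)⁻¹ • (ContinuousLinearMap.proj j : (Fin n → ℝ) →L[ℝ] ℝ)) z :=
            by have := (Real.hasDerivAt_log (ne_of_gt (hz1 j))).comp_hasFDerivAt z (hproj j z); exact this
          have hf2 : HasFDerivAt (fun y : Fin n → ℝ => Real.log (1 - ∑ k, y k))
              ((1 - ∑ k, z k)⁻¹ • (-T)) z :=
            by have := (Real.hasDerivAt_log (ne_of_gt h1σz)).comp_hasFDerivAt z (hm z); exact this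
          exact hf1.sub hf2
        show fderiv ℝ (fun y => fderiv ℝ h y (Pi.single j 1)) z (Pi.single i 1) = _
        rw [Filter.EventuallyEq.fderiv_eq hev, hfd.fderiv]
        have e2 : T (Pi.single i 1) = 1 := by
          rw [hTapp, Finset.sum_pi_single']
          simp
        rw [ContinuousLinearMap.sub_apply, ContinuousLinearMap.smul_apply,
          ContinuousLinearMap.smul_apply, ContinuousLinearMap.neg_apply, e2]
        have e1 : (ContinuousLinearMap.proj j : (Fin n → ℝ) →L[ℝ] ℝ) (Pi.single i 1)
            = if j = i then (1:ℝ) else 0 := by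
          simp [Pi.single_apply]
        rw [e1]
        by_cases hij : i = j
        · subst hij
          simp
        · rw [if_neg (fun hc => hij hc.symm), if_neg hij]
          simp
      ext i j
      rw [hmat i j]
      simp [Matrix.of_apply]
    -- hess h z * M z = 1
    have hmul : hess h z * M z = 1 := by
      rw [hhess, hMdef]
      ext i k
      rw [Matrix.mul_apply]
      simp only [Matrix.of_apply, Matrix.sub_apply, Matrix.diagonal_apply,
        Matrix.vecMulVec_apply, add_mul, ite_mul, zero_mul]
      rw [Finset.sum_add_distrib]
      have e1 : (∑ j, if i = j then (z j)⁻¹ * ((if j = k then z j else 0) - z j * z k) else 0)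
          = (z i)⁻¹ * ((if i = k then z i else 0) - z i * z k) := by
        rw [Finset.sum_ite_eq Finset.univ i
          (fun j => (z j)⁻¹ * ((if j = k then z j else 0) - z j * z k))]
        simp
      have e2 : (∑ j, (1 - ∑ l, z l)⁻¹ * ((if j = k then z j else 0) - z j * z k))
          = (1 - ∑ l, z l)⁻¹ * (z k - (∑ l, z l) * z k) := by
        rw [← Finset.mul_sum]
        congr 1
        rw [Finset.sum_sub_distrib, Finset.sum_ite_eq' Finset.univ k (fun j => z j)]
        simp [Finset.sum_mul]
      rw [e1, e2, Matrix.one_apply]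
      have hzi : z i ≠ 0 := ne_of_gt (hz1 i)
      have hσ : (1:ℝ) - ∑ l, z l ≠ 0 := ne_of_gt h1σz
      by_cases hik : i = k
      · subst hik
        simp only [if_pos rfl, ↓reduceIte]
        field_simp
        ring
      · simp only [if_neg hik]
        field_simp
        ring
    exact (Matrix.inv_eq_right_inv hmul).symm
  refine ⟨hInv, fun z hz => ⟨hSymm z, hPos z hz⟩, hD2, hC3, ?_⟩
  exact ⟨fun i j => (hsmooth i j).continuous.continuousOn,
    fun i j => (hsmooth i j).contDiffOn,
    fun z _ => hSymm z, hPos, fun z hz ζ => (hD2 z hz ζ).2⟩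

end
end

section
/- Let M : S → ℝ^{n×n} satisfy (C1) and (C2) on int S. Then for every smooth function μ : ℝ → int S and every ξ ∈ C^∞(ℝ;ℝⁿ) whose derivative ∂_xξ has compact support, the following integration-by-parts identity and sign hold: ∫_ℝ ξᵀ ∂_x³( M(μ) ∂_xξ ) dx − (1/2) ∫_ℝ ξᵀ ∂_x( DM(μ)[∂_x²μ] ∂_xξ ) dx = −(1/2) ∫_ℝ ∂_xξᵀ D²M(μ)[∂_xμ, ∂_xμ] ∂_xξ dx + ∫_ℝ ∂_x²ξᵀ M(μ) ∂_x²ξ dx ≥ 0. -/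
open MeasureTheory Filter Topology Set Matrix
open scoped ENNReal ContDiff

noncomputable section

namespace HeatAux
variable {n : ℕ} {U : Set (Fin n → ℝ)}


/-- integral of derivative of a compactly supported C¹ function vanishes -/
lemma integral_deriv_zero (f : ℝ → ℝ) (hf : ContDiff ℝ ∞ f)
    (hsupp : HasCompactSupport f) : ∫ x : ℝ, deriv f x = 0 := by
  obtain ⟨R, hR⟩ := hsupp.isBounded.subset_closedBall 0
  set r : ℝ := |R| + 1 with hr
  have hrpos : 0 < r := by positivity
  have houts : ∀ x : ℝ, x ∉ Set.Ioc (-r) r → deriv f x = 0 := by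
    intro x hx
    have hxt : x ∉ tsupport f := by
      intro hmem
      have := hR hmem
      simp only [Metric.mem_closedBall, Real.dist_eq, sub_zero] at this
      simp only [Set.mem_Ioc, not_and_or, not_lt, not_le] at hx
      have h1 : |x| ≤ R := this
      have h2 : R ≤ |R| := le_abs_self R
      rcases hx with h | h
      · have := neg_le_of_abs_le (h1.trans h2)
        linarith
      · have := le_of_abs_le (h1.trans h2)
        linarith
    have : x ∉ Function.support (deriv f) := fun hmem => hxt (support_deriv_subset hmem)
    simpa using Function.notMem_support.mp this
  have h1 : ∫ x : ℝ, deriv f x = ∫ x in Set.Ioc (-r) r, deriv f x :=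
    (MeasureTheory.setIntegral_eq_integral_of_forall_compl_eq_zero
      (fun x hx => houts x hx)).symm
  rw [h1, ← intervalIntegral.integral_of_le (by linarith)]
  rw [intervalIntegral.integral_deriv_eq_sub
    (fun x _ => (hf.differentiable (by simp)).differentiableAt)
    ((hf.continuous_deriv (by exact_mod_cast le_top)).intervalIntegrable _ _)]
  have hz : ∀ x : ℝ, |R| < |x| → f x = 0 := by
    intro x hx
    by_contra h
    have hxt := subset_tsupport f (Function.mem_support.mpr h)
    have := hR hxt
    simp only [Metric.mem_closedBall, Real.dist_eq, sub_zero] at this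
    have h2 : R ≤ |R| := le_abs_self R
    have := this.trans h2
    linarith
  rw [hz r (by rw [abs_of_pos hrpos, hr]; linarith),
    hz (-r) (by rw [abs_neg, abs_of_pos hrpos, hr]; linarith)]
  ring


variable {n : ℕ}

lemma hasDerivAt_dot {u v : ℝ → Fin n → ℝ} {u' v' : Fin n → ℝ} {x : ℝ}
    (hu : HasDerivAt u u' x) (hv : HasDerivAt v v' x) :
    HasDerivAt (fun y => u y ⬝ᵥ v y) (u' ⬝ᵥ v x + u x ⬝ᵥ v') x := by
  simp only [dotProduct]
  have h : HasDerivAt (fun y => ∑ i, u y i * v y i)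
      (∑ i, (u' i * v x i + u x i * v' i)) x :=
    HasDerivAt.fun_sum fun i _ =>
      ((hasDerivAt_pi.mp hu) i).mul ((hasDerivAt_pi.mp hv) i)
  convert h using 1
  rw [← Finset.sum_add_distrib]

lemma contDiff_dot {u v : ℝ → Fin n → ℝ} (hu : ContDiff ℝ ∞ u) (hv : ContDiff ℝ ∞ v) :
    ContDiff ℝ ∞ (fun y => u y ⬝ᵥ v y) := by
  simp only [dotProduct]
  exact ContDiff.sum fun i _ => ((contDiff_pi.mp hu) i).mul ((contDiff_pi.mp hv) i)

lemma hcs_dot_right {u v : ℝ → Fin n → ℝ} (hv : HasCompactSupport v) :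
    HasCompactSupport (fun y => u y ⬝ᵥ v y) := by
  apply hv.mono
  intro x hx
  simp only [Function.mem_support, ne_eq] at hx ⊢
  intro h
  exact hx (by rw [h, dotProduct_zero])

lemma hcs_dot_left {u v : ℝ → Fin n → ℝ} (hu : HasCompactSupport u) :
    HasCompactSupport (fun y => u y ⬝ᵥ v y) := by
  apply hu.mono
  intro x hx
  simp only [Function.mem_support, ne_eq] at hx ⊢
  intro h
  exact hx (by rw [h, zero_dotProduct])

/-- Integration by parts on ℝ for dot products, with compactly supported `v`. -/
lemma ibp {u v : ℝ → Fin n → ℝ} (hu : ContDiff ℝ ∞ u) (hv : ContDiff ℝ ∞ v)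
    (hcv : HasCompactSupport v) :
    ∫ x : ℝ, u x ⬝ᵥ deriv v x = - ∫ x : ℝ, deriv u x ⬝ᵥ v x := by
  have hdu : Differentiable ℝ u := hu.differentiable (by simp)
  have hdv : Differentiable ℝ v := hv.differentiable (by simp)
  have hu' : ContDiff ℝ ∞ (deriv u) := (contDiff_infty_iff_deriv.mp hu).2
  have hv' : ContDiff ℝ ∞ (deriv v) := (contDiff_infty_iff_deriv.mp hv).2
  set p : ℝ → ℝ := fun x => u x ⬝ᵥ v x with hp
  have hderiv : ∀ x, deriv p x = deriv u x ⬝ᵥ v x + u x ⬝ᵥ deriv v x := fun x =>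
    (hasDerivAt_dot (hdu x).hasDerivAt (hdv x).hasDerivAt).deriv
  have hint : ∫ x : ℝ, deriv p x = 0 :=
    integral_deriv_zero p (contDiff_dot hu hv) (hcs_dot_right hcv)
  have hia : Integrable (fun x => deriv u x ⬝ᵥ v x) :=
    ((contDiff_dot hu' hv).continuous).integrable_of_hasCompactSupport (hcs_dot_right hcv)
  have hib : Integrable (fun x => u x ⬝ᵥ deriv v x) :=
    ((contDiff_dot hu hv').continuous).integrable_of_hasCompactSupport
      (hcs_dot_right hcv.deriv)
  have := hint
  rw [show (fun x => deriv p x) = fun x => deriv u x ⬝ᵥ v x + u x ⬝ᵥ deriv v x from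
    funext hderiv] at this
  rw [integral_add hia hib] at this
  linarith


variable {U : Set (Fin n → ℝ)}

lemma line_hasDerivAt (z ζ : Fin n → ℝ) :
    HasDerivAt (fun t : ℝ => z + t • ζ) ζ 0 := by
  simpa using ((hasDerivAt_id (0:ℝ)).smul_const ζ).const_add z

lemma lineDeriv_eq {F : (Fin n → ℝ) → ℝ} {z : Fin n → ℝ}
    (hd : DifferentiableAt ℝ F z) (ζ : Fin n → ℝ) :
    deriv (fun t : ℝ => F (z + t • ζ)) 0 = fderiv ℝ F z ζ := by
  have h0 : z + (0:ℝ) • ζ = z := by simp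
  have hd' : HasFDerivAt F (fderiv ℝ F z) (z + (0:ℝ) • ζ) := by
    rw [h0]; exact hd.hasFDerivAt
  exact (hd'.comp_hasDerivAt 0 (line_hasDerivAt z ζ)).deriv

lemma diffAt_of_contDiffOn {F : (Fin n → ℝ) → ℝ} (hU : IsOpen U)
    (hF : ContDiffOn ℝ ∞ F U) {z : Fin n → ℝ} (hz : z ∈ U) :
    DifferentiableAt ℝ F z :=
  ((hF.contDiffAt (hU.mem_nhds hz)).differentiableAt (by simp))

lemma matDirDeriv_eq {M : (Fin n → ℝ) → Matrix (Fin n) (Fin n) ℝ} (hU : IsOpen U)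
    (hM : ∀ i j, ContDiffOn ℝ ∞ (fun z => M z i j) U) {z : Fin n → ℝ} (hz : z ∈ U)
    (ζ : Fin n → ℝ) (i j : Fin n) :
    matDirDeriv M z ζ i j = fderiv ℝ (fun y => M y i j) z ζ := by
  unfold matDirDeriv
  rw [Matrix.of_apply]
  exact lineDeriv_eq (diffAt_of_contDiffOn hU (hM i j) hz) ζ

lemma matDirDeriv2_eq {M : (Fin n → ℝ) → Matrix (Fin n) (Fin n) ℝ} (hU : IsOpen U)
    (hM : ∀ i j, ContDiffOn ℝ ∞ (fun z => M z i j) U) {z : Fin n → ℝ} (hz : z ∈ U)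
    (ζ ζ' : Fin n → ℝ) (i j : Fin n) :
    matDirDeriv2 M z ζ ζ' i j
      = fderiv ℝ (fun y => fderiv ℝ (fun w => M w i j) y ζ) z ζ' := by
  unfold matDirDeriv2
  rw [Matrix.of_apply]
  set F : (Fin n → ℝ) → ℝ := fun w => M w i j with hFdef
  have hF : ContDiffOn ℝ ∞ F U := hM i j
  -- eventually, z + s • ζ' ∈ U
  have hev : ∀ᶠ s in 𝓝 (0:ℝ), z + s • ζ' ∈ U := by
    have hcont : Continuous (fun s : ℝ => z + s • ζ') :=
      continuous_const.add (continuous_id.smul continuous_const)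
    have : Tendsto (fun s : ℝ => z + s • ζ') (𝓝 0) (𝓝 z) := by
      simpa using hcont.tendsto 0
    exact this.eventually (hU.mem_nhds hz)
  have hev2 : (fun s : ℝ => deriv (fun t : ℝ => F (z + t • ζ + s • ζ')) 0)
      =ᶠ[𝓝 (0:ℝ)] fun s : ℝ => fderiv ℝ F (z + s • ζ') ζ := by
    filter_upwards [hev] with s hs
    have harr : (fun t : ℝ => F (z + t • ζ + s • ζ'))
        = fun t : ℝ => F ((z + s • ζ') + t • ζ) := by
      funext t; congr 1; abel
    rw [harr]
    exact lineDeriv_eq (diffAt_of_contDiffOn hU hF hs) ζ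
  rw [hev2.deriv_eq]
  -- now the outer derivative
  have hG : ContDiffOn ℝ ∞ (fun y => fderiv ℝ F y ζ) U := by
    have h1 : ContDiffOn ℝ ∞ (fderiv ℝ F) U :=
      hF.fderiv_of_isOpen hU (by exact_mod_cast le_top)
    exact h1.clm_apply contDiffOn_const
  have harr2 : (fun s : ℝ => fderiv ℝ F (z + s • ζ') ζ)
      = fun s : ℝ => (fun y => fderiv ℝ F y ζ) (z + s • ζ') := rfl
  rw [harr2]
  exact lineDeriv_eq (diffAt_of_contDiffOn hU hG hz) ζ'

lemma curve_hasDerivAt {F : (Fin n → ℝ) → ℝ} {c : ℝ → Fin n → ℝ} (hU : IsOpen U)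
    (hF : ContDiffOn ℝ ∞ F U) (hc : ContDiff ℝ ∞ c) (hmem : ∀ x, c x ∈ U) (x : ℝ) :
    HasDerivAt (fun y => F (c y)) (fderiv ℝ F (c x) (deriv c x)) x :=
  (diffAt_of_contDiffOn hU hF (hmem x)).hasFDerivAt.comp_hasDerivAt x
    ((hc.differentiable (by simp)) x).hasDerivAt

lemma curve_smooth {F : (Fin n → ℝ) → ℝ} {c : ℝ → Fin n → ℝ} (hU : IsOpen U)
    (hF : ContDiffOn ℝ ∞ F U) (hc : ContDiff ℝ ∞ c) (hmem : ∀ x, c x ∈ U) :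
    ContDiff ℝ ∞ (fun y => F (c y)) := by
  rw [contDiff_iff_contDiffAt]
  intro x
  exact (hF.contDiffAt (hU.mem_nhds (hmem x))).comp x hc.contDiffAt

lemma curve_deriv {F : (Fin n → ℝ) → ℝ} {c : ℝ → Fin n → ℝ} (hU : IsOpen U)
    (hF : ContDiffOn ℝ ∞ F U) (hc : ContDiff ℝ ∞ c) (hmem : ∀ x, c x ∈ U) :
    deriv (fun y => F (c y)) = fun x => fderiv ℝ F (c x) (deriv c x) :=
  funext fun x => (curve_hasDerivAt hU hF hc hmem x).deriv

lemma curve_deriv2_hasDerivAt {F : (Fin n → ℝ) → ℝ} {c : ℝ → Fin n → ℝ} (hU : IsOpen U)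
    (hF : ContDiffOn ℝ ∞ F U) (hc : ContDiff ℝ ∞ c) (hmem : ∀ x, c x ∈ U) (x : ℝ) :
    HasDerivAt (fun y => fderiv ℝ F (c y) (deriv c y))
      (fderiv ℝ (fun w => fderiv ℝ F w (deriv c x)) (c x) (deriv c x)
        + fderiv ℝ F (c x) (deriv (deriv c) x)) x := by
  set Φ := fderiv ℝ F with hΦdef
  have hΦ : ContDiffOn ℝ ∞ Φ U := hF.fderiv_of_isOpen hU (by exact_mod_cast le_top)
  have hΦd : DifferentiableAt ℝ Φ (c x) :=
    (hΦ.contDiffAt (hU.mem_nhds (hmem x))).differentiableAt (by simp)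
  have h1 : HasDerivAt (fun y => Φ (c y)) (fderiv ℝ Φ (c x) (deriv c x)) x :=
    hΦd.hasFDerivAt.comp_hasDerivAt x
      ((hc.differentiable (by simp)) x).hasDerivAt
  have h2 : HasDerivAt (deriv c) (deriv (deriv c) x) x :=
    (((contDiff_infty_iff_deriv.mp hc).2.differentiable (by simp)) x).hasDerivAt
  have h3 := h1.clm_apply h2
  have h4 : fderiv ℝ (fun w => Φ w (deriv c x)) (c x) (deriv c x)
      = fderiv ℝ Φ (c x) (deriv c x) (deriv c x) := by
    rw [fderiv_clm_apply hΦd (differentiableAt_const _)]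
    simp
  rw [h4]
  exact h3

lemma hasDerivAt_mulVec {P : ℝ → Matrix (Fin n) (Fin n) ℝ} {P' : Matrix (Fin n) (Fin n) ℝ}
    {v : ℝ → Fin n → ℝ} {v' : Fin n → ℝ} {x : ℝ}
    (hP : ∀ i j, HasDerivAt (fun y => P y i j) (P' i j) x)
    (hv : HasDerivAt v v' x) :
    HasDerivAt (fun y => P y *ᵥ v y) (P' *ᵥ v x + P x *ᵥ v') x := by
  rw [hasDerivAt_pi]
  intro i
  simp only [Matrix.mulVec, dotProduct, Pi.add_apply]
  have h : HasDerivAt (fun y => ∑ j, P y i j * v y j)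
      (∑ j, (P' i j * v x j + P x i j * v' j)) x :=
    HasDerivAt.fun_sum fun j _ => (hP i j).mul ((hasDerivAt_pi.mp hv) j)
  exact h.congr_deriv Finset.sum_add_distrib

lemma contDiff_mulVec {P : ℝ → Matrix (Fin n) (Fin n) ℝ} {v : ℝ → Fin n → ℝ}
    (hP : ∀ i j, ContDiff ℝ ∞ (fun y => P y i j)) (hv : ContDiff ℝ ∞ v) :
    ContDiff ℝ ∞ (fun y => P y *ᵥ v y) := by
  rw [contDiff_pi]
  intro i
  simp only [Matrix.mulVec, dotProduct]
  exact ContDiff.sum fun j _ => (hP i j).mul ((contDiff_pi.mp hv) j)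

lemma hcs_mulVec {P : ℝ → Matrix (Fin n) (Fin n) ℝ} {v : ℝ → Fin n → ℝ}
    (hv : HasCompactSupport v) : HasCompactSupport (fun y => P y *ᵥ v y) := by
  apply hv.mono
  intro x hx
  simp only [Function.mem_support, ne_eq] at hx ⊢
  intro h
  exact hx (by rw [h, Matrix.mulVec_zero])

lemma dot_mulVec_symm {A : Matrix (Fin n) (Fin n) ℝ} (hA : ∀ i j, A i j = A j i)
    (u v : Fin n → ℝ) : u ⬝ᵥ (A *ᵥ v) = v ⬝ᵥ (A *ᵥ u) := by
  simp only [dotProduct, Matrix.mulVec, Finset.mul_sum]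
  rw [Finset.sum_comm]
  refine Finset.sum_congr rfl fun j _ => Finset.sum_congr rfl fun i _ => ?_
  rw [hA i j]
  ring


end HeatAux

/-- the integration-by-parts identity and sign at the core of the
geodesic convexity of the heat entropy. -/
theorem heat_entropy_convexity_identity {n : ℕ} (hn : 1 ≤ n)
    (S : Set (Fin n → ℝ)) (hSconv : Convex ℝ S) (hScomp : IsCompact S)
    (hSint : (interior S).Nonempty)
    (M : (Fin n → ℝ) → Matrix (Fin n) (Fin n) ℝ) (hM : IsMobility S M)
    (μ : ℝ → Fin n → ℝ) (hμsmooth : ContDiff ℝ (⊤ : ℕ∞) μ) (hμint : ∀ x, μ x ∈ interior S)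
    (ξ : ℝ → Fin n → ℝ) (hξsmooth : ContDiff ℝ (⊤ : ℕ∞) ξ) (hξsupp : HasCompactSupport (deriv ξ)) :
    ((∫ x : ℝ, ξ x ⬝ᵥ deriv (deriv (deriv (fun y => M (μ y) *ᵥ deriv ξ y))) x)
      - (1/2) * ∫ x : ℝ,
          ξ x ⬝ᵥ deriv (fun y => matDirDeriv M (μ y) (deriv (deriv μ) y) *ᵥ deriv ξ y) x
      =
      -(1/2) * (∫ x : ℝ,
          deriv ξ x ⬝ᵥ (matDirDeriv2 M (μ x) (deriv μ x) (deriv μ x) *ᵥ deriv ξ x))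
        + ∫ x : ℝ, deriv (deriv ξ) x ⬝ᵥ (M (μ x) *ᵥ deriv (deriv ξ) x)) ∧
    0 ≤ -(1/2) * (∫ x : ℝ,
          deriv ξ x ⬝ᵥ (matDirDeriv2 M (μ x) (deriv μ x) (deriv μ x) *ᵥ deriv ξ x))
        + ∫ x : ℝ, deriv (deriv ξ) x ⬝ᵥ (M (μ x) *ᵥ deriv (deriv ξ) x) := by

  classical
  have hU : IsOpen (interior S) := isOpen_interior
  have hMsm : ∀ i j, ContDiffOn ℝ ∞ (fun z => M z i j) (interior S) :=
    fun i j => (hM.smooth i j).of_le (by simp)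
  have hμ : ContDiff ℝ ∞ μ := hμsmooth.of_le (by simp)
  have hξ : ContDiff ℝ ∞ ξ := hξsmooth.of_le (by simp)
  have h1top : (1 : WithTop ℕ∞) ≤ ((⊤ : ℕ∞) : WithTop ℕ∞) := by exact_mod_cast le_top
  have hμ₁ : ContDiff ℝ ∞ (deriv μ) := (contDiff_infty_iff_deriv.mp hμ).2
  have hμ₂ : ContDiff ℝ ∞ (deriv (deriv μ)) := (contDiff_infty_iff_deriv.mp hμ₁).2
  have hξ₁ : ContDiff ℝ ∞ (deriv ξ) := (contDiff_infty_iff_deriv.mp hξ).2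
  have hξ₂ : ContDiff ℝ ∞ (deriv (deriv ξ)) := (contDiff_infty_iff_deriv.mp hξ₁).2
  -- entry functions of M along the curve
  have hA : ∀ i j, ContDiff ℝ ∞ (fun x => M (μ x) i j) :=
    fun i j => HeatAux.curve_smooth hU (hMsm i j) hμ hμint
  have ha1 : ∀ i j x, HasDerivAt (fun y => M (μ y) i j)
      (matDirDeriv M (μ x) (deriv μ x) i j) x := by
    intro i j x
    have h := HeatAux.curve_hasDerivAt hU (hMsm i j) hμ hμint x
    rwa [← HeatAux.matDirDeriv_eq hU hMsm (hμint x) (deriv μ x) i j] at h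
  have hA1 : ∀ i j, ContDiff ℝ ∞ (fun x => matDirDeriv M (μ x) (deriv μ x) i j) := by
    intro i j
    have heq : (fun x => matDirDeriv M (μ x) (deriv μ x) i j)
        = deriv (fun y => M (μ y) i j) := funext fun x => ((ha1 i j x).deriv).symm
    rw [heq]
    exact (contDiff_infty_iff_deriv.mp (hA i j)).2
  have hCsm : ∀ i j, ContDiff ℝ ∞
      (fun x => matDirDeriv M (μ x) (deriv (deriv μ) x) i j) := by
    intro i j
    have heq : (fun x => matDirDeriv M (μ x) (deriv (deriv μ) x) i j)
        = fun x => (fderiv ℝ (fun w => M w i j) (μ x)) (deriv (deriv μ) x) :=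
      funext fun x => HeatAux.matDirDeriv_eq hU hMsm (hμint x) _ i j
    rw [heq]
    have hΦ : ContDiffOn ℝ ∞ (fderiv ℝ (fun w => M w i j)) (interior S) :=
      (hMsm i j).fderiv_of_isOpen hU (by exact_mod_cast le_top)
    have hcomp : ContDiff ℝ ∞ (fun x => fderiv ℝ (fun w => M w i j) (μ x)) := by
      rw [contDiff_iff_contDiffAt]
      intro x
      exact (hΦ.contDiffAt (hU.mem_nhds (hμint x))).comp x hμ.contDiffAt
    exact hcomp.clm_apply hμ₂
  have ha2 : ∀ i j x, HasDerivAt (fun y => matDirDeriv M (μ y) (deriv μ y) i j)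
      (matDirDeriv2 M (μ x) (deriv μ x) (deriv μ x) i j
        + matDirDeriv M (μ x) (deriv (deriv μ) x) i j) x := by
    intro i j x
    have h := HeatAux.curve_deriv2_hasDerivAt hU (hMsm i j) hμ hμint x
    have hfun : (fun y => fderiv ℝ (fun w => M w i j) (μ y) (deriv μ y))
        = (fun y => matDirDeriv M (μ y) (deriv μ y) i j) :=
      funext fun y => (HeatAux.matDirDeriv_eq hU hMsm (hμint y) _ i j).symm
    rw [hfun] at h
    rw [HeatAux.matDirDeriv2_eq hU hMsm (hμint x),
      HeatAux.matDirDeriv_eq hU hMsm (hμint x)]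
    exact h
  have hBsm : ∀ i j, ContDiff ℝ ∞
      (fun x => matDirDeriv2 M (μ x) (deriv μ x) (deriv μ x) i j) := by
    intro i j
    have heq : (fun x => matDirDeriv2 M (μ x) (deriv μ x) (deriv μ x) i j)
        = fun x => deriv (fun y => matDirDeriv M (μ y) (deriv μ y) i j) x
            - matDirDeriv M (μ x) (deriv (deriv μ) x) i j := by
      funext x
      rw [(ha2 i j x).deriv]
      ring
    rw [heq]
    exact ((contDiff_infty_iff_deriv.mp (hA1 i j)).2).sub (hCsm i j)
  -- symmetry of the first directional derivative along the curve
  have hsymm : ∀ x i j, matDirDeriv M (μ x) (deriv μ x) i j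
      = matDirDeriv M (μ x) (deriv μ x) j i := by
    intro x i j
    rw [HeatAux.matDirDeriv_eq hU hMsm (hμint x), HeatAux.matDirDeriv_eq hU hMsm (hμint x)]
    have hev : (fun y => M y i j) =ᶠ[𝓝 (μ x)] (fun y => M y j i) := by
      filter_upwards [hU.mem_nhds (hμint x)] with y hy
      have h := hM.symm y hy
      calc M y i j = (M y)ᵀ j i := (Matrix.transpose_apply (M y) j i).symm
        _ = M y j i := by rw [h]
    rw [hev.fderiv_eq]
  -- the vector fields
  set f : ℝ → Fin n → ℝ := fun y => M (μ y) *ᵥ deriv ξ y with hfdef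
  set g : ℝ → Fin n → ℝ :=
    fun y => matDirDeriv M (μ y) (deriv (deriv μ) y) *ᵥ deriv ξ y with hgdef
  have hfsm : ContDiff ℝ ∞ f := HeatAux.contDiff_mulVec hA hξ₁
  have hgsm : ContDiff ℝ ∞ g := HeatAux.contDiff_mulVec hCsm hξ₁
  have hfc : HasCompactSupport f := HeatAux.hcs_mulVec hξsupp
  have hgc : HasCompactSupport g := HeatAux.hcs_mulVec hξsupp
  have hf1sm : ContDiff ℝ ∞ (deriv f) := (contDiff_infty_iff_deriv.mp hfsm).2
  have hf2sm : ContDiff ℝ ∞ (deriv (deriv f)) := (contDiff_infty_iff_deriv.mp hf1sm).2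
  have hfd : ∀ x, HasDerivAt f
      (matDirDeriv M (μ x) (deriv μ x) *ᵥ deriv ξ x + M (μ x) *ᵥ deriv (deriv ξ) x) x :=
    fun x => HeatAux.hasDerivAt_mulVec (fun i j => ha1 i j x)
      ((hξ₁.differentiable (by simp) x).hasDerivAt)
  -- integrand abbreviations
  set e₁ : ℝ → ℝ :=
    fun x => deriv (deriv ξ) x ⬝ᵥ (matDirDeriv M (μ x) (deriv μ x) *ᵥ deriv ξ x) with he₁
  set e₂ : ℝ → ℝ :=
    fun x => deriv (deriv ξ) x ⬝ᵥ (M (μ x) *ᵥ deriv (deriv ξ) x) with he₂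
  set e₃ : ℝ → ℝ :=
    fun x => deriv ξ x ⬝ᵥ (matDirDeriv2 M (μ x) (deriv μ x) (deriv μ x) *ᵥ deriv ξ x) with he₃
  set e₄ : ℝ → ℝ :=
    fun x => deriv ξ x ⬝ᵥ (matDirDeriv M (μ x) (deriv (deriv μ) x) *ᵥ deriv ξ x) with he₄
  have int₁ : Integrable e₁ :=
    ((HeatAux.contDiff_dot hξ₂ (HeatAux.contDiff_mulVec hA1 hξ₁)).continuous
      ).integrable_of_hasCompactSupport (HeatAux.hcs_dot_right (HeatAux.hcs_mulVec hξsupp))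
  have int₂ : Integrable e₂ :=
    ((HeatAux.contDiff_dot hξ₂ (HeatAux.contDiff_mulVec hA hξ₂)).continuous
      ).integrable_of_hasCompactSupport (HeatAux.hcs_dot_right (HeatAux.hcs_mulVec hξsupp.deriv))
  have int₃ : Integrable e₃ :=
    ((HeatAux.contDiff_dot hξ₁ (HeatAux.contDiff_mulVec hBsm hξ₁)).continuous
      ).integrable_of_hasCompactSupport (HeatAux.hcs_dot_left hξsupp)
  have int₄ : Integrable e₄ :=
    ((HeatAux.contDiff_dot hξ₁ (HeatAux.contDiff_mulVec hCsm hξ₁)).continuous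
      ).integrable_of_hasCompactSupport (HeatAux.hcs_dot_left hξsupp)
  -- first term: two integrations by parts
  have hT1a : ∫ x : ℝ, ξ x ⬝ᵥ deriv (deriv (deriv f)) x
      = - ∫ x : ℝ, deriv ξ x ⬝ᵥ deriv (deriv f) x :=
    HeatAux.ibp hξ hf2sm hfc.deriv.deriv
  have hT1b : ∫ x : ℝ, deriv ξ x ⬝ᵥ deriv (deriv f) x
      = - ∫ x : ℝ, deriv (deriv ξ) x ⬝ᵥ deriv f x :=
    HeatAux.ibp hξ₁ hf1sm hfc.deriv
  have hT1c : ∫ x : ℝ, deriv (deriv ξ) x ⬝ᵥ deriv f x = (∫ x : ℝ, e₁ x) + ∫ x : ℝ, e₂ x := by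
    have heq : ∀ x : ℝ, deriv (deriv ξ) x ⬝ᵥ deriv f x = e₁ x + e₂ x := by
      intro x
      rw [(hfd x).deriv, dotProduct_add, he₁, he₂]
    rw [integral_congr_ae (Filter.Eventually.of_forall heq)]
    exact integral_add int₁ int₂
  -- the quadratic form trick
  set q : ℝ → ℝ :=
    fun x => deriv ξ x ⬝ᵥ (matDirDeriv M (μ x) (deriv μ x) *ᵥ deriv ξ x) with hqdef
  have hqsm : ContDiff ℝ ∞ q := HeatAux.contDiff_dot hξ₁ (HeatAux.contDiff_mulVec hA1 hξ₁)
  have hqc : HasCompactSupport q := HeatAux.hcs_dot_left hξsupp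
  have hqd : ∀ x, deriv q x = 2 * e₁ x + (e₃ x + e₄ x) := by
    intro x
    have hP : ∀ i j, HasDerivAt (fun y => matDirDeriv M (μ y) (deriv μ y) i j)
        ((matDirDeriv2 M (μ x) (deriv μ x) (deriv μ x)
          + matDirDeriv M (μ x) (deriv (deriv μ) x)) i j) x := by
      intro i j
      simpa [Matrix.add_apply] using ha2 i j x
    have hmul := HeatAux.hasDerivAt_mulVec hP ((hξ₁.differentiable (by simp) x).hasDerivAt)
    have hdot := HeatAux.hasDerivAt_dot ((hξ₁.differentiable (by simp) x).hasDerivAt) hmul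
    rw [hdot.deriv]
    have hsymA : deriv ξ x ⬝ᵥ (matDirDeriv M (μ x) (deriv μ x) *ᵥ deriv (deriv ξ) x)
        = deriv (deriv ξ) x ⬝ᵥ (matDirDeriv M (μ x) (deriv μ x) *ᵥ deriv ξ x) :=
      HeatAux.dot_mulVec_symm (hsymm x) _ _
    simp only [Matrix.add_mulVec, dotProduct_add]
    rw [hsymA, he₁, he₃, he₄]
    ring
  have hq0 : (0:ℝ) = 2 * (∫ x : ℝ, e₁ x) + ((∫ x : ℝ, e₃ x) + ∫ x : ℝ, e₄ x) := by
    have h0 := HeatAux.integral_deriv_zero q hqsm hqc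
    rw [integral_congr_ae (Filter.Eventually.of_forall hqd)] at h0
    rw [integral_add (f := fun x => 2 * e₁ x) (g := fun x => e₃ x + e₄ x)
      (int₁.const_mul 2) (int₃.add int₄), integral_add int₃ int₄,
      integral_const_mul] at h0
    linarith
  -- second term: one integration by parts
  have hT2 : ∫ x : ℝ, ξ x ⬝ᵥ deriv g x = - ∫ x : ℝ, e₄ x := by
    have h := HeatAux.ibp hξ hgsm hgc
    rw [h]
  constructor
  · rw [hT1a, hT1b, hT1c, hT2]
    linarith
  · have hI₃ : (∫ x : ℝ, e₃ x) ≤ 0 := by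
      apply integral_nonpos
      intro x
      have hps := (hM.concave (μ x) (hμint x) (deriv μ x)).dotProduct_mulVec_nonneg (deriv ξ x)
      simp only [Matrix.neg_mulVec, dotProduct_neg, star_trivial] at hps
      simp only [he₃, Pi.zero_apply]
      linarith
    have hI₂ : 0 ≤ ∫ x : ℝ, e₂ x := by
      apply integral_nonneg
      intro x
      have hps := ((hM.posDef (μ x) (hμint x)).posSemidef).dotProduct_mulVec_nonneg (deriv (deriv ξ) x)
      simpa [he₂] using hps
    linarith


end
end

section
/- Let S = [S^ℓ, S^r] ⊂ ℝⁿ be an n-cuboid and M(z) = diag(m₁(z₁),…,m_n(z_n)) a fully decoupled mobility with m_j ∈ C²([S^ℓ_j, S^r_j]), m_j(s) > 0 for s ∈ (S^ℓ_j,S^r_j), m_j(S^ℓ_j) = m_j(S^r_j) = 0, and m_j'' ≤ 0 on [S^ℓ_j,S^r_j]. Fix α > 0 and R > 0, and set λ* := − max_j ‖m_j‖_{C²} R ( ‖m_j‖_{C²} R / (8α) + 1 ). Then for every λ ≤ λ*, every z ∈ int S, all v, ζ ∈ ℝⁿ, and all q¹, q² ∈ ℝⁿ with |q¹| ≤ R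 and |q²| ≤ R, the following inequality holds: 0 ≤ −(α/2) vᵀ D²M(z)[ζ,ζ] v − λ vᵀ M(z) v − (1/2) vᵀ D²M(z)[ζ, M(z) q¹] v + vᵀ D²M(z)[ζ, M(z) v] q¹ + vᵀ DM(z)[M(z) q²] v. -/
open MeasureTheory Filter Topology Set Matrix
open scoped ENNReal

noncomputable section

section Helpers

private lemma iterDW_eq' {f : ℝ → ℝ} {s : Set ℝ} {x : ℝ} (hs : s ∈ 𝓝 x) (n : ℕ) :
    iteratedDerivWithin n f s x = iteratedDeriv n f x := by
  rw [iteratedDerivWithin, iteratedDeriv,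
    iteratedFDerivWithin_congr_set (Filter.eventuallyEq_univ.2 hs),
    iteratedFDerivWithin_univ]

private lemma hasDerivAt_line' {m : ℝ → ℝ} {u : Set ℝ} (hu : IsOpen u)
    (hm : ContDiffOn ℝ 2 m u) {x : ℝ} (hx : x ∈ u) (c : ℝ) :
    HasDerivAt (fun t : ℝ => m (x + t * c)) (c * deriv m x) 0 := by
  have hd : DifferentiableAt ℝ m x :=
    (hm.contDiffAt (hu.mem_nhds hx)).differentiableAt (by norm_num)
  have hline : HasDerivAt (fun t : ℝ => x + t * c) c 0 := by
    simpa using ((hasDerivAt_id (0 : ℝ)).mul_const c).const_add x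
  have h0 : x + (0 : ℝ) * c = x := by ring
  have hx' : HasDerivAt m (deriv m x) (x + (0:ℝ) * c) := by rw [h0]; exact hd.hasDerivAt
  have := hx'.comp 0 hline
  simpa [Function.comp_def, mul_comm] using this

private lemma deriv2_line' {m : ℝ → ℝ} {u : Set ℝ} (hu : IsOpen u)
    (hm : ContDiffOn ℝ 2 m u) {x : ℝ} (hx : x ∈ u) (c c' : ℝ) :
    deriv (fun s : ℝ => deriv (fun t : ℝ => m (x + t * c + s * c')) 0) 0
      = c * c' * deriv (deriv m) x := by
  have hcont : Continuous fun s : ℝ => x + s * c' := by continuity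
  have h0 : x + (0 : ℝ) * c' = x := by ring
  have hev : ∀ᶠ s in 𝓝 (0 : ℝ), x + s * c' ∈ u :=
    hcont.continuousAt.eventually_mem (hu.mem_nhds (by rw [h0]; exact hx))
  have hev2 : (fun s : ℝ => deriv (fun t : ℝ => m (x + t * c + s * c')) 0)
      =ᶠ[𝓝 (0:ℝ)] fun s : ℝ => c * deriv m (x + s * c') := by
    filter_upwards [hev] with s hs
    have h := (hasDerivAt_line' hu hm hs c).deriv
    have heq : (fun t : ℝ => m (x + t * c + s * c'))
        = fun t : ℝ => m (x + s * c' + t * c) := by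
      funext t; ring_nf
    rw [heq]; exact h
  rw [hev2.deriv_eq]
  have hdm : ContDiffOn ℝ 1 (deriv m) u :=
    hm.deriv_of_isOpen hu (by norm_num)
  have hd2 : DifferentiableAt ℝ (deriv m) x :=
    (hdm.contDiffAt (hu.mem_nhds hx)).differentiableAt (by norm_num)
  have hline : HasDerivAt (fun s : ℝ => x + s * c') c' 0 := by
    simpa using ((hasDerivAt_id (0 : ℝ)).mul_const c').const_add x
  have hx' : HasDerivAt (deriv m) (deriv (deriv m) x) (x + (0:ℝ) * c') := by
    rw [h0]; exact hd2.hasDerivAt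
  have hcomp := hx'.comp 0 hline
  have : HasDerivAt (fun s : ℝ => c * deriv m (x + s * c'))
      (c * (deriv (deriv m) x * c')) 0 := by
    simpa [Function.comp] using hcomp.const_mul c
  rw [this.deriv]; ring

private lemma scalarG' {α R B a d μ lam ζ q1 q2 : ℝ}
    (hα : 0 < α) (hμ0 : 0 ≤ μ) (hμB : μ ≤ B) (ha : a ≤ 0)
    (haB : |a| ≤ B) (hdB : |d| ≤ B) (hq1 : |q1| ≤ R) (hq2 : |q2| ≤ R)
    (hlam : lam ≤ -(B * R * (B * R / (8 * α) + 1))) :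
    0 ≤ -(α / 2) * a * ζ ^ 2 - lam * μ + (1 / 2) * a * ζ * μ * q1 + d * μ * q2 := by
  have hB0 : 0 ≤ B := le_trans hμ0 hμB
  have h8 : (0 : ℝ) < 8 * α := by linarith
  have hlam' : 8 * α * lam ≤ -(B * R * (B * R)) - 8 * α * (B * R) := by
    have h1 := mul_le_mul_of_nonneg_left hlam (le_of_lt h8)
    have h2 : (8 * α) * -(B * R * (B * R / (8 * α) + 1))
        = -(B * R * (B * R)) - 8 * α * (B * R) := by
      field_simp; ring
    linarith [h2 ▸ h1]
  have ha' : 0 ≤ -a := neg_nonneg.2 ha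
  have habs : -a ≤ B := by have := abs_le.1 haB; linarith
  have hq1sq : q1 ^ 2 ≤ R ^ 2 := by
    have := abs_le.1 hq1; nlinarith
  have hprod : (-a) * μ * q1 ^ 2 ≤ B * B * R ^ 2 := by
    have h1 : (-a) * μ ≤ B * B := mul_le_mul habs hμB hμ0 hB0
    exact mul_le_mul h1 hq1sq (sq_nonneg q1) (mul_nonneg hB0 hB0)
  have hdq : -(B * R) ≤ d * q2 := by
    have h1 : |d * q2| ≤ B * R := by
      rw [abs_mul]; exact mul_le_mul hdB hq2 (abs_nonneg q2) hB0
    linarith [(abs_le.1 h1).1]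
  have hdq' : 8 * α * -(B * R) ≤ 8 * α * (d * q2) :=
    mul_le_mul_of_nonneg_left hdq (le_of_lt h8)
  have hbr : 0 ≤ 8 * α * (d * q2) - 8 * α * lam + a * μ * q1 ^ 2 := by nlinarith
  have hsq : 0 ≤ (-a) * (2 * α * ζ - μ * q1) ^ 2 := mul_nonneg ha' (sq_nonneg _)
  have hm : 0 ≤ μ * (8 * α * (d * q2) - 8 * α * lam + a * μ * q1 ^ 2) :=
    mul_nonneg hμ0 hbr
  have hG8 : 0 ≤ 8 * α *
      (-(α / 2) * a * ζ ^ 2 - lam * μ + (1 / 2) * a * ζ * μ * q1 + d * μ * q2) := by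
    nlinarith [hsq, hm]
  nlinarith [hG8, h8]

end Helpers

/-- the pointwise inequality giving λ-geodesic convexity of the
regularized potential energy for a fully decoupled mobility. -/
theorem decoupled_potential_convexity_inequality {n : ℕ} (hn : 1 ≤ n)
    (Sl Sr : Fin n → ℝ) (hlt : ∀ j, Sl j < Sr j)
    (S : Set (Fin n → ℝ)) (hS : S = Set.Icc Sl Sr)
    (m : Fin n → ℝ → ℝ)
    (hC2 : ∀ j, ContDiffOn ℝ 2 (m j) (Set.Icc (Sl j) (Sr j)))
    (hpos : ∀ j, ∀ s ∈ Set.Ioo (Sl j) (Sr j), 0 < m j s)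
    (hzero : ∀ j, m j (Sl j) = 0 ∧ m j (Sr j) = 0)
    (hconc : ∀ j, ∀ s ∈ Set.Icc (Sl j) (Sr j),
      iteratedDerivWithin 2 (m j) (Set.Icc (Sl j) (Sr j)) s ≤ 0)
    (M : (Fin n → ℝ) → Matrix (Fin n) (Fin n) ℝ)
    (hMdef : ∀ z, M z = Matrix.diagonal (fun j => m j (z j)))
    (α R : ℝ) (hα : 0 < α) (hR : 0 < R)
    -- B j bounds the C² norm of m_j on [Sℓ_j, Sr_j]
    (B : Fin n → ℝ)
    (hB : ∀ j, ∀ k : ℕ, k ≤ 2 → ∀ s ∈ Set.Icc (Sl j) (Sr j),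
      |iteratedDerivWithin k (m j) (Set.Icc (Sl j) (Sr j)) s| ≤ B j)
    (lam : ℝ) (hlam : ∀ j, lam ≤ -(B j * R * (B j * R / (8 * α) + 1))) :
    ∀ z ∈ interior S, ∀ v ζ q₁ q₂ : Fin n → ℝ,
      (∀ j, |q₁ j| ≤ R) → (∀ j, |q₂ j| ≤ R) →
      0 ≤ -(α / 2) * (v ⬝ᵥ (matDirDeriv2 M z ζ ζ *ᵥ v))
            - lam * (v ⬝ᵥ (M z *ᵥ v))
            - (1/2) * (v ⬝ᵥ (matDirDeriv2 M z ζ (M z *ᵥ q₁) *ᵥ v))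
            + v ⬝ᵥ (matDirDeriv2 M z ζ (M z *ᵥ v) *ᵥ q₁)
            + v ⬝ᵥ (matDirDeriv M z (M z *ᵥ q₂) *ᵥ v) := by
  intro z hz v ζ q₁ q₂ hq₁ hq₂
  -- coordinates of z lie in the open intervals
  have hz' : ∀ j, z j ∈ Set.Ioo (Sl j) (Sr j) := by
    have hmem : z ∈ interior (Set.Icc Sl Sr) := by rw [← hS]; exact hz
    rw [← Set.pi_univ_Icc, interior_pi_set Set.finite_univ] at hmem
    intro j
    have := hmem j (Set.mem_univ j)
    simpa [interior_Icc] using this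
  have hz'' : ∀ j, z j ∈ Set.Icc (Sl j) (Sr j) := fun j => Set.Ioo_subset_Icc_self (hz' j)
  have hIcc_nhds : ∀ j, Set.Icc (Sl j) (Sr j) ∈ 𝓝 (z j) :=
    fun j => Icc_mem_nhds (hz' j).1 (hz' j).2
  have hCu : ∀ j, ContDiffOn ℝ 2 (m j) (Set.Ioo (Sl j) (Sr j)) :=
    fun j => (hC2 j).mono Set.Ioo_subset_Icc_self
  -- bounds on m, m', m'' at z j
  have hμ0 : ∀ j, 0 ≤ m j (z j) := fun j => le_of_lt (hpos j (z j) (hz' j))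
  have hμB : ∀ j, m j (z j) ≤ B j := by
    intro j
    have h := hB j 0 (by norm_num) (z j) (hz'' j)
    simp only [iteratedDerivWithin_zero] at h
    exact le_trans (le_abs_self _) h
  have hd1B : ∀ j, |deriv (m j) (z j)| ≤ B j := by
    intro j
    have h := hB j 1 (by norm_num) (z j) (hz'' j)
    rwa [iterDW_eq' (hIcc_nhds j) 1, iteratedDeriv_one] at h
  have he2 : ∀ j, iteratedDeriv 2 (m j) (z j) = deriv (deriv (m j)) (z j) := by
    intro j
    rw [show (2:ℕ) = 1 + 1 from rfl, iteratedDeriv_succ, iteratedDeriv_one]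
  have hd2B : ∀ j, |deriv (deriv (m j)) (z j)| ≤ B j := by
    intro j
    have h := hB j 2 (by norm_num) (z j) (hz'' j)
    rwa [iterDW_eq' (hIcc_nhds j) 2, he2 j] at h
  have hd2neg : ∀ j, deriv (deriv (m j)) (z j) ≤ 0 := by
    intro j
    have h := hconc j (z j) (hz'' j)
    rwa [iterDW_eq' (hIcc_nhds j) 2, he2 j] at h
  -- the directional derivatives are diagonal
  have hD1 : ∀ w : Fin n → ℝ, matDirDeriv M z w
      = Matrix.diagonal (fun j => w j * deriv (m j) (z j)) := by
    intro w
    ext i j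
    simp only [matDirDeriv, Matrix.of_apply]
    by_cases hij : i = j
    · subst hij
      have heq : (fun t : ℝ => M (z + t • w) i i) = fun t : ℝ => m i (z i + t * w i) := by
        funext t
        rw [hMdef]
        simp [Matrix.diagonal_apply_eq]
      rw [heq, (hasDerivAt_line' isOpen_Ioo (hCu i) (hz' i) (w i)).deriv,
        Matrix.diagonal_apply_eq]
    · have heq : (fun t : ℝ => M (z + t • w) i j) = fun _ : ℝ => 0 := by
        funext t
        rw [hMdef]
        exact Matrix.diagonal_apply_ne _ hij
      rw [heq, deriv_const, Matrix.diagonal_apply_ne _ hij]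
  have hD2 : ∀ ζ' w : Fin n → ℝ, matDirDeriv2 M z ζ' w
      = Matrix.diagonal (fun j => ζ' j * w j * deriv (deriv (m j)) (z j)) := by
    intro ζ' w
    ext i j
    simp only [matDirDeriv2, Matrix.of_apply]
    by_cases hij : i = j
    · subst hij
      have heq : (fun s : ℝ => deriv (fun t : ℝ => M (z + t • ζ' + s • w) i i) 0)
          = fun s : ℝ => deriv (fun t : ℝ => m i (z i + t * ζ' i + s * w i)) 0 := by
        funext s
        congr 1
        funext t
        rw [hMdef]
        simp [Matrix.diagonal_apply_eq]
      rw [heq, deriv2_line' isOpen_Ioo (hCu i) (hz' i) (ζ' i) (w i),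
        Matrix.diagonal_apply_eq]
    · have heq : (fun s : ℝ => deriv (fun t : ℝ => M (z + t • ζ' + s • w) i j) 0)
          = fun _ : ℝ => 0 := by
        funext s
        have : (fun t : ℝ => M (z + t • ζ' + s • w) i j) = fun _ : ℝ => 0 := by
          funext t
          rw [hMdef]
          exact Matrix.diagonal_apply_ne _ hij
        rw [this, deriv_const]
      rw [heq, deriv_const, Matrix.diagonal_apply_ne _ hij]
  rw [hD2 ζ ζ, hD2 ζ (M z *ᵥ q₁), hD2 ζ (M z *ᵥ v), hD1 (M z *ᵥ q₂), hMdef]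
  simp only [Matrix.mulVec_diagonal, dotProduct]
  rw [Finset.mul_sum, Finset.mul_sum, Finset.mul_sum, ← Finset.sum_sub_distrib,
    ← Finset.sum_sub_distrib, ← Finset.sum_add_distrib, ← Finset.sum_add_distrib]
  apply Finset.sum_nonneg
  intro j _
  have hkey := scalarG' (α := α) (R := R) (B := B j) (a := deriv (deriv (m j)) (z j))
    (d := deriv (m j) (z j)) (μ := m j (z j)) (lam := lam) (ζ := ζ j)
    (q1 := q₁ j) (q2 := q₂ j) hα (hμ0 j) (hμB j) (hd2neg j) (hd2B j) (hd1B j)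
    (hq₁ j) (hq₂ j) (hlam j)
  nlinarith [mul_nonneg (sq_nonneg (v j)) hkey]


end
end
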